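/- arXiv:1501.03078 — 11 statements merged into one kernel-verified Lean document; each statement's English description precedes it below -/
import Mathlib

section
/- Let N be a natural number and let u and v be nontrivial coprime divisors of N (i.e. u ∣ N, v ∣ N, 1 < u < N, 1 < v < N, gcd(u, v) = 1). Let b be an integer and f ∈ ℤ[X] a digit polynomial of N to base b such that (1) gcd(lc f, N) = 1, where lc f is the leading coefficient of f, and (2) d := deg f is smaller than the largest prime factor of v. Then there exists an integer x with u ∣ f(x) and v ∤ f(x). -/
/-! Let `p` be the largest prime factor of `v`. Since `p ∤ lc f` and `deg f < p`, the reduction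
of `f` mod `p` is a nonzero polynomial over `𝔽_p` with fewer roots than `p`, so `p ∤ f(x₀)` for
some `x₀`. By the Chinese remainder theorem pick `x ≡ b (mod u)` and `x ≡ x₀ (mod p)`: then
`f(x) ≡ f(b) = N ≡ 0 (mod u)`, while `p ∤ f(x)` and hence `v ∤ f(x)`. -/

open Polynomial

theorem IsCoprime.exists_dvd_sub_and_dvd_sub {R : Type*} [CommRing R] {m n : R}
    (h : IsCoprime m n) (a b : R) : ∃ x, m ∣ x - a ∧ n ∣ x - b := by
  obtain ⟨s, t, hst⟩ := h
  exact ⟨a * (t * n) + b * (s * m), ⟨(b - a) * s, by linear_combination a * hst⟩,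
    ⟨(a - b) * t, by linear_combination b * hst⟩⟩

theorem Polynomial.dvd_eval_iff_of_dvd_sub {R : Type*} [CommRing R] (f : R[X]) {m x y : R}
    (h : m ∣ x - y) : m ∣ f.eval x ↔ m ∣ f.eval y :=
  dvd_iff_dvd_of_dvd_sub (h.trans (f.sub_dvd_eval_sub x y))

theorem Polynomial.exists_not_dvd_eval_of_natDegree_lt {p : ℕ} (hp : p.Prime) {f : ℤ[X]}
    (hlc : ¬ (p : ℤ) ∣ f.leadingCoeff) (hdeg : f.natDegree < p) :
    ∃ x : ℤ, ¬ (p : ℤ) ∣ f.eval x := by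
  have := Fact.mk hp
  set g := f.map (Int.castRingHom (ZMod p))
  have hg : g ≠ 0 := fun h => hlc <| (ZMod.intCast_zmod_eq_zero_iff_dvd _ _).mp <| by
    simpa [g] using congrArg (coeff · f.natDegree) h
  have hcard : g.natDegree < Cardinal.mk (ZMod p) := by
    rw [Cardinal.mk_fintype, ZMod.card]
    exact_mod_cast natDegree_map_le.trans_lt hdeg
  obtain ⟨y, hy⟩ := exists_eval_ne_zero_of_natDegree_lt_card g hg hcard
  obtain ⟨x, rfl⟩ := ZMod.intCast_surjective y
  refine ⟨x, fun hdvd => hy ?_⟩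
  rw [eval_intCast_map]
  exact (ZMod.intCast_zmod_eq_zero_iff_dvd _ _).mpr hdvd

theorem digit_poly_exists_suitable_general (N u v : ℕ) (hu : u ∣ N) (hv : v ∣ N)
    (huv : Nat.Coprime u v)
    (b : ℤ) (f : Polynomial ℤ) (hf : f.eval b = (N : ℤ))
    (hlc : Int.gcd f.leadingCoeff (N : ℤ) = 1)
    (hne : v.primeFactors.Nonempty)
    (hdeg : f.natDegree < v.primeFactors.max' hne) :
    ∃ x : ℤ, (u : ℤ) ∣ f.eval x ∧ ¬ (v : ℤ) ∣ f.eval x := by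
  set p := v.primeFactors.max' hne
  have hp_mem : p ∈ v.primeFactors := Finset.max'_mem _ hne
  have hp : p.Prime := Nat.prime_of_mem_primeFactors hp_mem
  have hpv : p ∣ v := Nat.dvd_of_mem_primeFactors hp_mem
  have hlc_p : ¬ (p : ℤ) ∣ f.leadingCoeff := fun h =>
    (Nat.prime_iff_prime_int.mp hp).not_isUnit <|
      (Int.isCoprime_iff_gcd_eq_one.mpr hlc).isUnit_of_dvd' h (by exact_mod_cast hpv.trans hv)
  obtain ⟨x₀, hx₀⟩ := exists_not_dvd_eval_of_natDegree_lt hp hlc_p hdeg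
  have hup : IsCoprime (u : ℤ) p := Nat.isCoprime_iff_coprime.mpr (huv.coprime_dvd_right hpv)
  obtain ⟨x, hxb, hxx₀⟩ := hup.exists_dvd_sub_and_dvd_sub b x₀
  refine ⟨x, (f.dvd_eval_iff_of_dvd_sub hxb).mpr (hf ▸ Int.natCast_dvd_natCast.mpr hu), fun h => ?_⟩
  exact hx₀ <| (f.dvd_eval_iff_of_dvd_sub hxx₀).mp ((Int.natCast_dvd_natCast.mpr hpv).trans h)

/-- Let `u, v` be nontrivial coprime divisors of `N`, `b ∈ ℤ` and `f ∈ ℤ[X]` a digit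
polynomial of `N` to base `b` (i.e. `f(b) = N`) such that the leading coefficient of `f`
is coprime to `N` and `deg f` is smaller than the largest prime factor of `v`.
Then there is an integer `x` with `u ∣ f(x)` and `v ∤ f(x)`. -/
theorem digit_poly_exists_suitable (N u v : ℕ) (hu : u ∣ N) (hv : v ∣ N)
    (hu1 : 1 < u) (huN : u < N) (hv1 : 1 < v) (hvN : v < N)
    (huv : Nat.Coprime u v)
    (b : ℤ) (f : Polynomial ℤ) (hf : f.eval b = (N : ℤ))
    (hlc : Int.gcd f.leadingCoeff (N : ℤ) = 1)
    (hne : v.primeFactors.Nonempty)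
    (hdeg : f.natDegree < v.primeFactors.max' hne) :
    ∃ x : ℤ, (u : ℤ) ∣ f.eval x ∧ ¬ (v : ℤ) ∣ f.eval x :=
  digit_poly_exists_suitable_general N u v hu hv huv b f hf hlc hne hdeg
end

section
/- Let N be a semiprime natural number with prime factors p and q, p < q. Let f ∈ ℤ[X], let n be the number of distinct zeros of f modulo p and m the number of distinct zeros of f modulo q. Then ν(f) = mp + nq − 2nm. -/
/-!
Since `p` and `q` are distinct primes, `gcd(a, pq)` is a proper divisor of `pq` other than `1`
exactly when one of `p`, `q` divides `a` and the other does not. Whether `p ∣ f(x)` depends only on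
`x mod p`, and likewise for `q`, so by the Chinese remainder theorem the suitable `x ∈ Z_N`
correspond to the pairs in `Z_p × Z_q` with `x mod p` a zero of `f` and `x mod q` not, or vice
versa: there are `n (q - m) + (p - n) m` of them.
-/

/-- `x ∈ Z_N = {0, ..., N−1}` is suitable for `g ∈ ℤ[X]` if `1 < gcd(g(x), N) < N`;
`nu N g` counts the suitable elements. -/
def nu (N : ℕ) (g : Polynomial ℤ) : ℕ :=
  ((Finset.range N).filter
    (fun (x : ℕ) => 1 < Int.gcd (g.eval ((x : ℤ))) (N : ℤ) ∧
      Int.gcd (g.eval ((x : ℤ))) (N : ℤ) < N)).card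

open Finset Polynomial

theorem Nat.Prime.gcd_eq_ite {p : ℕ} (hp : p.Prime) (k : ℕ) :
    k.gcd p = if p ∣ k then p else 1 := by
  split_ifs with h
  · exact Nat.gcd_eq_right h
  · exact Nat.Coprime.symm ((hp.coprime_iff_not_dvd).mpr h)

theorem Nat.one_lt_gcd_mul_and_lt_iff_xor {p q : ℕ} (hp : p.Prime) (hq : q.Prime) (hpq : p ≠ q)
    (k : ℕ) : (1 < k.gcd (p * q) ∧ k.gcd (p * q) < p * q) ↔ Xor (p ∣ k) (q ∣ k) := by
  have := hp.two_le
  have := hq.two_le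
  rw [Nat.Coprime.gcd_mul k ((Nat.coprime_primes hp hq).mpr hpq), hp.gcd_eq_ite, hq.gcd_eq_ite]
  split_ifs <;> simp [*] <;> constructor <;> nlinarith

theorem Int.one_lt_gcd_mul_and_lt_iff_xor {p q : ℕ} (hp : p.Prime) (hq : q.Prime) (hpq : p ≠ q)
    (a : ℤ) :
    (1 < a.gcd ↑(p * q) ∧ a.gcd ↑(p * q) < p * q) ↔ Xor ((p : ℤ) ∣ a) ((q : ℤ) ∣ a) := by
  simpa only [Int.gcd, Int.natAbs_natCast, Int.natCast_dvd] using
    Nat.one_lt_gcd_mul_and_lt_iff_xor hp hq hpq a.natAbs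

theorem Polynomial.natCast_dvd_eval_natCast_mod_iff (f : ℤ[X]) (p x : ℕ) :
    (p : ℤ) ∣ f.eval ((x % p : ℕ) : ℤ) ↔ (p : ℤ) ∣ f.eval (x : ℤ) := by
  simp only [← ZMod.intCast_zmod_eq_zero_iff_dvd, ← eq_intCast (Int.castRingHom (ZMod p)),
    ← eval_natCast_map, ZMod.natCast_mod]

section Periodic

variable {p q : ℕ} {A B : ℕ → Prop} [DecidablePred A] [DecidablePred B]

theorem card_filter_range_mul_and (hp : p ≠ 0) (hq : q ≠ 0) (hpq : p.Coprime q)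
    (hA : ∀ x, A (x % p) ↔ A x) (hB : ∀ x, B (x % q) ↔ B x) :
    #{x ∈ range (p * q) | A x ∧ B x} = #{x ∈ range p | A x} * #{x ∈ range q | B x} := by
  set crt : ℕ → ℕ → ℕ := fun a b => Nat.chineseRemainder hpq a b
  have crt_mod {a b : ℕ} (ha : a < p) (hb : b < q) : crt a b % p = a ∧ crt a b % q = b := by
    have hc := (Nat.chineseRemainder hpq a b).2
    exact ⟨Eq.trans hc.1 (Nat.mod_eq_of_lt ha), Eq.trans hc.2 (Nat.mod_eq_of_lt hb)⟩
  rw [← card_product]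
  refine card_nbij' (fun x => (x % p, x % q)) (fun ab => crt ab.1 ab.2) ?_ ?_ ?_ ?_
  · intro x hx
    simp_all [Nat.mod_lt, Nat.pos_of_ne_zero]
  · rintro ⟨a, b⟩ hab
    simp only [coe_product, coe_filter, mem_range, Set.mem_prod, Set.mem_ofPred_eq] at hab ⊢
    obtain ⟨hap, hbq⟩ := crt_mod hab.1.1 hab.2.1
    refine ⟨Nat.chineseRemainder_lt_mul _ _ _ hp hq, ?_, ?_⟩
    · rw [← hA, hap]; exact hab.1.2
    · rw [← hB, hbq]; exact hab.2.2
  · intro x hx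
    simp only [coe_filter, mem_range, Set.mem_ofPred_eq] at hx
    exact ((Nat.chineseRemainder_modEq_unique hpq (Nat.mod_modEq x p).symm
      (Nat.mod_modEq x q).symm).eq_of_lt_of_lt hx.1 (Nat.chineseRemainder_lt_mul _ _ _ hp hq)).symm
  · rintro ⟨a, b⟩ hab
    simp only [coe_product, coe_filter, mem_range, Set.mem_prod, Set.mem_ofPred_eq] at hab
    obtain ⟨hap, hbq⟩ := crt_mod hab.1.1 hab.2.1
    exact Prod.ext hap hbq

theorem card_filter_range_mul_xor (hp : p ≠ 0) (hq : q ≠ 0) (hpq : p.Coprime q)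
    (hA : ∀ x, A (x % p) ↔ A x) (hB : ∀ x, B (x % q) ↔ B x) :
    (#{x ∈ range (p * q) | Xor (A x) (B x)} : ℤ) =
      #{x ∈ range p | A x} * q + #{x ∈ range q | B x} * p
        - 2 * #{x ∈ range p | A x} * #{x ∈ range q | B x} := by
  have hsplit : #{x ∈ range (p * q) | Xor (A x) (B x)} =
      #{x ∈ range (p * q) | A x ∧ ¬B x} + #{x ∈ range (p * q) | ¬A x ∧ B x} := by
    rw [← card_union_of_disjoint (disjoint_filter.mpr fun _ _ h h' => h'.1 h.1), ← filter_or]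
    simp only [Xor, and_comm (a := B _)]
  have hcompl {r : ℕ} (C : ℕ → Prop) [DecidablePred C] :
      (#{x ∈ range r | ¬C x} : ℤ) = r - #{x ∈ range r | C x} := by
    rw [eq_sub_iff_add_eq, ← Nat.cast_add, add_comm, card_filter_add_card_filter_not, card_range]
  rw [hsplit, card_filter_range_mul_and hp hq hpq hA (fun x => not_congr (hB x)),
    card_filter_range_mul_and hp hq hpq (fun x => not_congr (hA x)) hB]
  push_cast [hcompl]
  ring

end Periodic

/-- Let `N = p * q` be semiprime with primes `p < q`, `f ∈ ℤ[X]`, `n` the number of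
distinct zeros of `f` modulo `p` and `m` the number of distinct zeros of `f` modulo `q`.
Then `ν(f) = mp + nq − 2nm`. -/
theorem nu_eq_of_semiprime (N p q : ℕ) (hp : p.Prime) (hq : q.Prime) (hpq : p < q)
    (hN : N = p * q) (f : Polynomial ℤ) (n m : ℕ)
    (hn : n = ((Finset.range p).filter (fun (x : ℕ) => (p : ℤ) ∣ f.eval ((x : ℤ)))).card)
    (hm : m = ((Finset.range q).filter (fun (x : ℕ) => (q : ℤ) ∣ f.eval ((x : ℤ)))).card) :
    (nu N f : ℤ) = m * p + n * q - 2 * n * m := by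
  subst hN hn hm
  have hsuitable : nu (p * q) f =
      #{x ∈ range (p * q) |
        Xor ((p : ℤ) ∣ f.eval ((x : ℕ) : ℤ)) ((q : ℤ) ∣ f.eval ((x : ℕ) : ℤ))} :=
    congrArg card (filter_congr fun x _ => Int.one_lt_gcd_mul_and_lt_iff_xor hp hq hpq.ne _)
  rw [hsuitable, card_filter_range_mul_xor hp.ne_zero hq.ne_zero
    ((Nat.coprime_primes hp hq).mpr hpq.ne) (f.natCast_dvd_eval_natCast_mod_iff p)
    (f.natCast_dvd_eval_natCast_mod_iff q)]
  ring
end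

section
/- Let N be a semiprime natural number with prime factors p and q, p < q. Let f ∈ ℤ[X] with d := deg f, and suppose f is not the zero polynomial modulo p and not the zero polynomial modulo q. If 2d < p, then ν(f) ≤ dp + dq − 2d². -/
open Finset Polynomial

theorem Nat.one_lt_and_lt_mul_iff_xor_dvd {p q m : ℕ} (hp : p.Prime) (hq : q.Prime)
    (hpq : p ≠ q) (hm : m ∣ p * q) : 1 < m ∧ m < p * q ↔ Xor (p ∣ m) (q ∣ m) := by
  have hp_q : ¬ p ∣ q := fun h => hpq ((Nat.prime_dvd_prime_iff_eq hp hq).mp h)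
  have hq_p : ¬ q ∣ p := fun h => hpq ((Nat.prime_dvd_prime_iff_eq hq hp).mp h).symm
  have hp_lt : p < p * q := lt_mul_of_one_lt_right hp.pos hq.one_lt
  have hq_lt : q < p * q := lt_mul_of_one_lt_left hq.pos hp.one_lt
  obtain ⟨a, b, ha, hb, rfl⟩ := Nat.dvd_mul.mp hm
  rcases (Nat.dvd_prime hp).mp ha with rfl | rfl <;>
    rcases (Nat.dvd_prime hq).mp hb with rfl | rfl <;>
    simp_all [Xor, hp.one_lt, hq.one_lt, hp.not_dvd_one, hq.not_dvd_one]

theorem Int.one_lt_gcd_and_gcd_lt_mul_iff_xor_dvd {p q : ℕ} (hp : p.Prime) (hq : q.Prime)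
    (hpq : p ≠ q) (a : ℤ) :
    1 < Int.gcd a ((p * q : ℕ) : ℤ) ∧ Int.gcd a ((p * q : ℕ) : ℤ) < p * q ↔
      Xor ((p : ℤ) ∣ a) ((q : ℤ) ∣ a) := by
  have hdvd : Int.gcd a ((p * q : ℕ) : ℤ) ∣ p * q :=
    Int.natCast_dvd_natCast.mp (Int.gcd_dvd_right _ _)
  rw [Nat.one_lt_and_lt_mul_iff_xor_dvd hp hq hpq hdvd, Int.dvd_gcd_iff, Int.dvd_gcd_iff]
  simp

theorem Polynomial.isRoot_map_zmod_iff_dvd_eval (f : ℤ[X]) (n : ℕ) (a : ℤ) :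
    (f.map (Int.castRingHom (ZMod n))).IsRoot (a : ZMod n) ↔ (n : ℤ) ∣ f.eval a := by
  rw [IsRoot, eval_intCast_map, eq_intCast, ZMod.intCast_zmod_eq_zero_iff_dvd, Int.cast_id]

theorem Polynomial.card_filter_isRoot_le_natDegree {R : Type*} [CommRing R] [IsDomain R]
    [Fintype R] [DecidableEq R] {g : R[X]} (hg : g ≠ 0) :
    #{u | g.IsRoot u} ≤ g.natDegree :=
  card_le_degree_of_subset_roots fun _ hu => (mem_roots hg).mpr (mem_filter.mp hu).2

theorem ZMod.card_filter_range_mul {m n : ℕ} [NeZero m] [NeZero n] (h : m.Coprime n)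
    (P : ZMod m × ZMod n → Prop) [DecidablePred P] :
    #{x ∈ range (m * n) | P (Nat.cast x)} = #{uv | P uv} := by
  have hcrt : ∀ z : ZMod (m * n), chineseRemainder h z = (z.val : ZMod m × ZMod n) := by
    intro z
    conv_lhs => rw [← natCast_zmod_val z]
    exact map_natCast _ _
  have hcrt_symm : ∀ uv, (((chineseRemainder h).symm uv).val : ZMod m × ZMod n) = uv :=
    fun uv => by rw [← hcrt, RingEquiv.apply_symm_apply]
  refine card_nbij' Nat.cast (fun uv => ((chineseRemainder h).symm uv).val) ?_ ?_ ?_ ?_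
  · intro x hx
    simpa using (mem_filter.mp hx).2
  · intro uv huv
    simpa [hcrt_symm, val_lt] using huv
  · intro x hx
    dsimp only
    rw [← map_natCast (chineseRemainder h) x, RingEquiv.symm_apply_apply,
      val_natCast_of_lt (mem_range.mp (mem_filter.mp hx).1)]
  · intro uv _
    exact hcrt_symm uv

theorem Finset.card_filter_xor_product {α β : Type*} (s : Finset α) (t : Finset β)
    (P : α → Prop) (Q : β → Prop) [DecidablePred P] [DecidablePred Q] :
    #{uv ∈ s ×ˢ t | Xor (P uv.1) (Q uv.2)} =
      #{a ∈ s | P a} * #{b ∈ t | ¬Q b} + #{a ∈ s | ¬P a} * #{b ∈ t | Q b} := by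
  classical
  have hsplit : {uv ∈ s ×ˢ t | Xor (P uv.1) (Q uv.2)} =
      {uv ∈ s ×ˢ t | P uv.1 ∧ ¬Q uv.2} ∪ {uv ∈ s ×ˢ t | ¬P uv.1 ∧ Q uv.2} := by
    ext uv
    simp only [mem_filter, mem_union]
    unfold Xor
    tauto
  rw [hsplit, card_union_of_disjoint (disjoint_filter.mpr fun _ _ h h' => h'.1 h.1),
    filter_product P (fun b => ¬Q b), filter_product (fun a => ¬P a) Q, card_product,
    card_product]

theorem mul_add_mul_le_of_add_eq {a a' b b' d p q : ℤ} (ha : a ≤ d) (hb : b ≤ d)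
    (hap : a + a' = p) (hbq : b + b' = q) (hdp : 2 * d ≤ p) (hpq : p ≤ q) :
    a * b' + a' * b ≤ d * p + d * q - 2 * d ^ 2 := by
  subst hap hbq
  nlinarith [mul_nonneg (sub_nonneg.mpr ha) (by linarith : 0 ≤ b + b' - 2 * b),
    mul_nonneg (sub_nonneg.mpr hb) (sub_nonneg.mpr hdp)]

theorem nu_mul_eq_card_filter_xor {p q : ℕ} [hp : Fact p.Prime] [hq : Fact q.Prime]
    (hpq : p ≠ q) (f : ℤ[X]) :
    nu (p * q) f = #{uv : ZMod p × ZMod q |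
      Xor ((f.map (Int.castRingHom (ZMod p))).IsRoot uv.1)
        ((f.map (Int.castRingHom (ZMod q))).IsRoot uv.2)} := by
  rw [nu, ← ZMod.card_filter_range_mul ((Nat.coprime_primes hp.out hq.out).mpr hpq)]
  refine congrArg card (filter_congr fun x _ => ?_)
  rw [Int.one_lt_gcd_and_gcd_lt_mul_iff_xor_dvd hp.out hq.out hpq,
    ← isRoot_map_zmod_iff_dvd_eval, ← isRoot_map_zmod_iff_dvd_eval, Int.cast_natCast,
    Int.cast_natCast, Prod.fst_natCast, Prod.snd_natCast]

/-- Let `N = p * q` be semiprime with primes `p < q`, `f ∈ ℤ[X]` of degree `d`,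
nonzero modulo `p` and modulo `q`. If `2d < p`, then `ν(f) ≤ dp + dq − 2d²`. -/
theorem nu_le_of_semiprime (N p q : ℕ) (hp : p.Prime) (hq : q.Prime) (hpq : p < q)
    (hN : N = p * q) (f : Polynomial ℤ) (d : ℕ) (hd : d = f.natDegree)
    (hfp : f.map (Int.castRingHom (ZMod p)) ≠ 0)
    (hfq : f.map (Int.castRingHom (ZMod q)) ≠ 0)
    (hdp : 2 * d < p) :
    (nu N f : ℤ) ≤ d * p + d * q - 2 * d ^ 2 := by
  subst hN hd
  have := Fact.mk hp
  have := Fact.mk hq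
  have hroots_card {r : ℕ} [Fact r.Prime] (hfr : f.map (Int.castRingHom (ZMod r)) ≠ 0) :
      #{u | (f.map (Int.castRingHom (ZMod r))).IsRoot u} ≤ f.natDegree :=
    (card_filter_isRoot_le_natDegree hfr).trans natDegree_map_le
  have hroots_add_nonroots (r : ℕ) [Fact r.Prime] :
      #{u | (f.map (Int.castRingHom (ZMod r))).IsRoot u} +
      #{u | ¬(f.map (Int.castRingHom (ZMod r))).IsRoot u} = r := by
    rw [card_filter_add_card_filter_not, card_univ, ZMod.card]
  rw [nu_mul_eq_card_filter_xor hpq.ne, ← univ_product_univ, card_filter_xor_product]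
  push_cast
  exact mul_add_mul_le_of_add_eq (by exact_mod_cast hroots_card hfp)
    (by exact_mod_cast hroots_card hfq) (by exact_mod_cast hroots_add_nonroots p)
    (by exact_mod_cast hroots_add_nonroots q) (by omega) (by omega)
end

section
/- Let N be a semiprime natural number with prime factors p and q (p ≠ q). Let d ∈ ℕ, let b_1, ..., b_d be integers, and for each i ∈ {1, ..., d} let f_i = n_{2,i} X² + n_{1,i} X + n_{0,i} ∈ ℤ[X] be a digit polynomial of N to base b_i of degree 2 (so f_i(b_i) = N and n_{2,i} ≠ 0). Suppose gcd(n_{2,i} · b_i, N) = 1 for every i, and define b_{d+i} ∈ Z_N by b_{d+i} ≡ n_{0,i} · n_{2,i}^{−1} · b_i^{−1} (mod N) for 1 ≤ i ≤ d. If gcd(b_j − b_k, N) = 1 for every choice of j ≠ k in {1, ..., 2d}, then ν(∏_{i=1}^d f_i) = 2dp + 2dq − 8d². -/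
/-!
Modulo a prime `r ∣ N`, the hypotheses give `f_i ≡ n_{2,i} (X - b_i) (X - b_{d+i})` with
`n_{2,i}` a unit, and the `2d` roots `b_1, …, b_{2d}` stay pairwise distinct. Hence `x` is
suitable iff `x mod p` lies in a `2d`-element root set `A ⊆ ZMod p` or `x mod q` lies in a
`2d`-element root set `B ⊆ ZMod q`, but not both; by the Chinese remainder theorem there are
`2d (q - 2d) + (p - 2d) 2d` such `x`.
-/

open Polynomial Finset

theorem quadratic_eq_mul_sub_mul_sub {R : Type*} [CommRing R] [NoZeroDivisors R]
    {a c e b b' : R} (hb : b ≠ 0) (hroot : a * b ^ 2 + c * b + e = 0) (hprod : a * b * b' = e)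
    (x : R) : a * x ^ 2 + c * x + e = a * (x - b) * (x - b') := by
  have hlin : c + a * b + a * b' = 0 := by
    have : b * (c + a * b + a * b') = 0 := by linear_combination hroot + hprod
    exact (mul_eq_zero.mp this).resolve_left hb
  linear_combination x * hlin - hprod

theorem quadratic_eq_zero_iff_of_root_of_mul_eq {R : Type*} [CommRing R] [IsDomain R]
    {a c e b b' : R} (ha : a ≠ 0) (hb : b ≠ 0) (hroot : a * b ^ 2 + c * b + e = 0)
    (hprod : a * b * b' = e) (x : R) : a * x ^ 2 + c * x + e = 0 ↔ x = b ∨ x = b' := by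
  rw [quadratic_eq_mul_sub_mul_sub hb hroot hprod, mul_assoc, mul_eq_zero, mul_eq_zero,
    sub_eq_zero, sub_eq_zero, or_iff_right ha]

theorem isUnit_intCast_zmod_of_gcd_eq_one {a : ℤ} {N r : ℕ} (hrN : r ∣ N)
    (h : Int.gcd a N = 1) : IsUnit (a : ZMod r) := by
  have := (Int.isCoprime_iff_gcd_eq_one.mpr h).map (Int.castRingHom (ZMod r))
  rwa [eq_intCast, eq_intCast, Int.cast_natCast, (ZMod.natCast_eq_zero_iff N r).mpr hrN,
    isCoprime_zero_right] at this

theorem card_image_intCast_zmod_of_gcd_sub_eq_one {ι : Type*} [Fintype ι] {g : ι → ℤ}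
    {N r : ℕ} [Nontrivial (ZMod r)] (hrN : r ∣ N)
    (hg : ∀ j k, j ≠ k → Int.gcd (g j - g k) N = 1) :
    #(univ.image fun j => (g j : ZMod r)) = Fintype.card ι := by
  refine (card_image_of_injective _ fun j k h => ?_).trans card_univ
  by_contra hne
  have := (isUnit_intCast_zmod_of_gcd_eq_one hrN (hg j k hne)).ne_zero
  push_cast at this
  exact this (sub_eq_zero.mpr h)

theorem gcd_sumElim_sub_eq_one {ι : Type*} {f g : ι → ℤ} {N : ℤ}
    (hf : ∀ j k, j ≠ k → Int.gcd (f j - f k) N = 1)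
    (hg : ∀ j k, j ≠ k → Int.gcd (g j - g k) N = 1)
    (hfg : ∀ j k, Int.gcd (f j - g k) N = 1) :
    ∀ j k, j ≠ k → Int.gcd (Sum.elim f g j - Sum.elim f g k) N = 1 := by
  rintro (j | j) (k | k) hjk
  · exact hf j k (by simpa using hjk)
  · exact hfg j k
  · rw [Sum.elim_inr, Sum.elim_inl, ← neg_sub, Int.neg_gcd]
    exact hfg k j
  · exact hg j k (by simpa using hjk)

theorem one_lt_gcd_and_gcd_lt_mul_iff_xor {p q : ℕ} (hp : p.Prime) (hq : q.Prime)
    (hpq : p ≠ q) (E : ℤ) :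
    (1 < Int.gcd E (p * q : ℕ) ∧ Int.gcd E (p * q : ℕ) < p * q) ↔
      Xor ((p : ℤ) ∣ E) ((q : ℤ) ∣ E) := by
  have hgcd_prime : ∀ {r : ℕ}, r.Prime → E.natAbs.gcd r = if r ∣ E.natAbs then r else 1 := by
    intro r hr
    split_ifs with h
    · exact Nat.gcd_eq_right h
    · exact Nat.Coprime.symm ((hr.coprime_iff_not_dvd).mpr h)
  rw [Int.gcd_eq_natAbs, Int.natAbs_natCast,
    Nat.Coprime.gcd_mul _ ((Nat.coprime_primes hp hq).mpr hpq), hgcd_prime hp, hgcd_prime hq,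
    Int.natCast_dvd, Int.natCast_dvd]
  have := hp.two_le
  have := hq.two_le
  split_ifs with hpE hqE hqE <;> simp only [hpE, hqE, xor_self, xor_true, xor_false, id,
    not_false_eq_true, iff_false, iff_true, not_and_or, not_lt]
  · exact Or.inr le_rfl
  · exact ⟨by omega, by nlinarith⟩
  · exact ⟨by omega, by nlinarith⟩
  · exact Or.inl le_rfl

theorem card_filter_range_mul_eq_card {p q : ℕ} [NeZero p] [NeZero q] (hpq : p.Coprime q)
    (s : Finset (ZMod p × ZMod q)) :
    #((range (p * q)).filter fun x : ℕ => ((x : ZMod p), (x : ZMod q)) ∈ s) = #s := by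
  let e := ZMod.chineseRemainder hpq
  have he (x : ℕ) : e (x : ZMod (p * q)) = ((x : ZMod p), (x : ZMod q)) := map_natCast e x
  refine card_bij' (fun x _ => e x) (fun z _ => (e.symm z).val) ?_ ?_ ?_ ?_
  · intro x hx
    rw [he]
    exact (mem_filter.mp hx).2
  · intro z hz
    rw [mem_filter, mem_range, ← he, ZMod.natCast_zmod_val, e.apply_symm_apply]
    exact ⟨ZMod.val_lt _, hz⟩
  · intro x hx
    rw [e.symm_apply_apply, ZMod.val_natCast_of_lt (mem_range.mp (mem_filter.mp hx).1)]
  · intro z _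
    rw [ZMod.natCast_zmod_val, e.apply_symm_apply]

theorem card_filter_xor_mem {α β : Type*} [Fintype α] [Fintype β] [DecidableEq α]
    [DecidableEq β] (A : Finset α) (B : Finset β) :
    #(univ.filter fun z : α × β => Xor (z.1 ∈ A) (z.2 ∈ B)) =
      #A * (Fintype.card β - #B) + (Fintype.card α - #A) * #B := by
  have hsplit :
      univ.filter (fun z : α × β => Xor (z.1 ∈ A) (z.2 ∈ B)) = A ×ˢ Bᶜ ∪ Aᶜ ×ˢ B := by
    ext z
    simp only [Xor, mem_filter_univ, mem_union, mem_product, mem_compl, and_comm]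
  rw [hsplit, card_union_of_disjoint, card_product, card_product, card_compl, card_compl]
  exact disjoint_left.mpr fun z hA hB =>
    (mem_compl.mp (mem_product.mp hB).1) (mem_product.mp hA).1

theorem natCast_dvd_eval_prod_quadratic_iff {N r d : ℕ} [Fact r.Prime] (hrN : r ∣ N)
    {b n2 n1 n0 bb : Fin d → ℤ}
    (hdig : ∀ i, n2 i * b i ^ 2 + n1 i * b i + n0 i = N)
    (hcop : ∀ i, Int.gcd (n2 i * b i) N = 1)
    (hbb : ∀ i, (N : ℤ) ∣ n2 i * b i * bb i - n0 i) (x : ℤ) :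
    (r : ℤ) ∣ (∏ i, (C (n2 i) * X ^ 2 + C (n1 i) * X + C (n0 i))).eval x ↔
      (x : ZMod r) ∈ univ.image fun j => ((Sum.elim b bb j : ℤ) : ZMod r) := by
  have hN : ((N : ℤ) : ZMod r) = 0 := by
    rw [Int.cast_natCast, ZMod.natCast_eq_zero_iff]
    exact hrN
  have hfactor : ∀ i, (n2 i : ZMod r) * x ^ 2 + n1 i * x + n0 i = 0 ↔
      (x : ZMod r) = b i ∨ (x : ZMod r) = bb i := by
    intro i
    have hunit := isUnit_intCast_zmod_of_gcd_eq_one hrN (hcop i)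
    rw [Int.cast_mul, IsUnit.mul_iff] at hunit
    apply quadratic_eq_zero_iff_of_root_of_mul_eq hunit.1.ne_zero hunit.2.ne_zero
    · rw [← hN, ← hdig i]
      push_cast
      ring
    · have := (ZMod.intCast_zmod_eq_zero_iff_dvd _ r).mpr
        ((Int.natCast_dvd_natCast.mpr hrN).trans (hbb i))
      push_cast at this
      exact sub_eq_zero.mp this
  rw [← ZMod.intCast_zmod_eq_zero_iff_dvd, eval_prod, Int.cast_prod, prod_eq_zero_iff]
  simp only [mem_univ, true_and, eval_add, eval_mul, eval_C, eval_pow, eval_X, Int.cast_add,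
    Int.cast_mul, Int.cast_pow, hfactor, mem_image, Sum.exists, Sum.elim_inl, Sum.elim_inr,
    exists_or]
  simp only [eq_comm]

theorem nu_prod_quadratic_digit_polys_general (N p q : ℕ) (hp : p.Prime) (hq : q.Prime)
    (hpq : p ≠ q) (hN : N = p * q) (d : ℕ)
    (b n2 n1 n0 : Fin d → ℤ)
    (hdig : ∀ i, n2 i * (b i) ^ 2 + n1 i * b i + n0 i = (N : ℤ))
    (hcop : ∀ i, Int.gcd (n2 i * b i) (N : ℤ) = 1)
    (bb : Fin d → ℤ)
    (hbb : ∀ i, 0 ≤ bb i ∧ bb i < N ∧ (N : ℤ) ∣ (n2 i * b i * bb i - n0 i))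
    (hb1 : ∀ j k, j ≠ k → Int.gcd (b j - b k) (N : ℤ) = 1)
    (hb2 : ∀ j k, j ≠ k → Int.gcd (bb j - bb k) (N : ℤ) = 1)
    (hb3 : ∀ j k, Int.gcd (b j - bb k) (N : ℤ) = 1) :
    (nu N (∏ i, (Polynomial.C (n2 i) * Polynomial.X ^ 2 + Polynomial.C (n1 i) *
        Polynomial.X + Polynomial.C (n0 i))) : ℤ)
      = 2 * d * p + 2 * d * q - 8 * d ^ 2 := by
  subst hN
  have : Fact p.Prime := ⟨hp⟩
  have : Fact q.Prime := ⟨hq⟩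
  let roots (r : ℕ) : Finset (ZMod r) := univ.image fun j => ((Sum.elim b bb j : ℤ) : ZMod r)
  have hroots_card (r : ℕ) [Fact r.Prime] (hr : r ∣ p * q) : #(roots r) = 2 * d := by
    rw [card_image_intCast_zmod_of_gcd_sub_eq_one hr (gcd_sumElim_sub_eq_one hb1 hb2 hb3)]
    simp [two_mul]
  have hdvd_iff (r : ℕ) [Fact r.Prime] (hr : r ∣ p * q) (x : ℤ) :=
    natCast_dvd_eval_prod_quadratic_iff hr hdig hcop (fun i => (hbb i).2.2) x
  have hnu : nu (p * q) (∏ i, (C (n2 i) * X ^ 2 + C (n1 i) * X + C (n0 i))) =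
      #(univ.filter fun z : ZMod p × ZMod q => Xor (z.1 ∈ roots p) (z.2 ∈ roots q)) := by
    rw [nu, ← card_filter_range_mul_eq_card ((Nat.coprime_primes hp hq).mpr hpq)]
    congr 1
    refine filter_congr fun x _ => ?_
    rw [one_lt_gcd_and_gcd_lt_mul_iff_xor hp hq hpq, hdvd_iff p (dvd_mul_right p q),
      hdvd_iff q (dvd_mul_left q p), mem_filter_univ, Int.cast_natCast, Int.cast_natCast]
  have h2d_le (r : ℕ) [Fact r.Prime] (hr : r ∣ p * q) : 2 * d ≤ r := by
    simpa only [hroots_card r hr, ZMod.card] using card_le_univ (roots r)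
  have hp_dvd : p ∣ p * q := dvd_mul_right p q
  have hq_dvd : q ∣ p * q := dvd_mul_left q p
  rw [hnu, card_filter_xor_mem, hroots_card p hp_dvd, hroots_card q hq_dvd, ZMod.card, ZMod.card]
  push_cast [Nat.cast_sub (h2d_le p hp_dvd), Nat.cast_sub (h2d_le q hq_dvd)]
  ring

/-- Let `N = p * q` be semiprime with distinct primes `p, q`. Let
`f_i = n_{2,i} X² + n_{1,i} X + n_{0,i}` be digit polynomials of `N` to bases `b_i` of
degree 2 (so `f_i(b_i) = N` and `n_{2,i} ≠ 0`), with `gcd(n_{2,i}·b_i, N) = 1` for all `i`.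
Let `b_{d+i} ∈ Z_N` satisfy `b_{d+i} ≡ n_{0,i}·n_{2,i}⁻¹·b_i⁻¹ (mod N)` (equivalently,
`n_{2,i}·b_i·b_{d+i} ≡ n_{0,i} (mod N)`). If `gcd(b_j − b_k, N) = 1` for all `j ≠ k` in
`{1, ..., 2d}`, then `ν(∏ f_i) = 2dp + 2dq − 8d²`. -/
theorem nu_prod_quadratic_digit_polys (N p q : ℕ) (hp : p.Prime) (hq : q.Prime)
    (hpq : p ≠ q) (hN : N = p * q) (d : ℕ)
    (b n2 n1 n0 : Fin d → ℤ)
    (hn2 : ∀ i, n2 i ≠ 0)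
    (hdig : ∀ i, n2 i * (b i) ^ 2 + n1 i * b i + n0 i = (N : ℤ))
    (hcop : ∀ i, Int.gcd (n2 i * b i) (N : ℤ) = 1)
    (bb : Fin d → ℤ)
    (hbb : ∀ i, 0 ≤ bb i ∧ bb i < N ∧ (N : ℤ) ∣ (n2 i * b i * bb i - n0 i))
    (hb1 : ∀ j k, j ≠ k → Int.gcd (b j - b k) (N : ℤ) = 1)
    (hb2 : ∀ j k, j ≠ k → Int.gcd (bb j - bb k) (N : ℤ) = 1)
    (hb3 : ∀ j k, Int.gcd (b j - bb k) (N : ℤ) = 1) :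
    (nu N (∏ i, (Polynomial.C (n2 i) * Polynomial.X ^ 2 + Polynomial.C (n1 i) *
        Polynomial.X + Polynomial.C (n0 i))) : ℤ)
      = 2 * d * p + 2 * d * q - 8 * d ^ 2 :=
  nu_prod_quadratic_digit_polys_general N p q hp hq hpq hN d b n2 n1 n0 hdig hcop bb hbb hb1 hb2 hb3
end

section
/- Let N ≥ 9 be a semiprime natural number with prime factors p and q (p ≠ q). Let d ∈ ℕ and let b_1, ..., b_d be consecutive integers (b_{i+1} = b_i + 1) with ⌈N^{1/2}/√2⌉ ≤ b_i ≤ ⌊N^{1/2}⌋ and gcd(b_i, N) = 1 for all i. For each i, let n_{0,i} = N mod b_i, n_{1,i} = ⌊N/b_i⌋ mod b_i, and n_{2,i} = ⌊N/b_i²⌋ be the b_i-adic digits of N, and set D := b_1 + ⌊N/b_d⌋. If gcd(D + z, N) = 1 for every z ∈ {0, ..., 2d−2}, and n_{1,i} ≤ n_{0,i} + 1 for every i, then: n_{2,i} = 1 for every i (so each b_i-adic digit polynomial P_{b_i} has degree 2 with leading coefficient 1), and, defining b_{d+i} ∈ Z_N by b_{d+i} ≡ n_{0,i} · b_i^{−1}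 (mod N), we have gcd(b_j − b_k, N) = 1 for every choice of j ≠ k in {1, ..., 2d}. -/
/-!
If `N/2 ≤ b² ≤ N` and `b` is coprime to `N`, then `N = b² + n₁ b + n₀`, and the digit condition
`n₁ ≤ n₀ + 1` gives `⌊N/(b+1)⌋ = ⌊N/b⌋ - 1`. Hence along consecutive bases `b_i = b₁ + (i-1)` and
`⌊N/b_i⌋ = ⌊N/b₁⌋ - (i-1)`. From `b_{d+i} b_i ≡ n_{0,i} = N - b_i ⌊N/b_i⌋` and `gcd(b_i, N) = 1` we get
`b_{d+i} ≡ -⌊N/b_i⌋ (mod N)`. So every difference `b_j - b_k` is congruent mod `N` either to an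
index difference `m` with `0 < |m| < d`, or to `D + z` with `0 ≤ z ≤ 2d - 2`. The latter are coprime
to `N` by hypothesis, and then so is every `0 < m ≤ 2d - 1`: `gcd(m, N) ≤ m` divides one of the
`2d - 1` consecutive numbers `D + z`.
-/

theorem Int.ModEq.gcd_eq {n a b : ℤ} (h : a ≡ b [ZMOD n]) : Int.gcd a n = Int.gcd b n := by
  rw [← Int.gcd_emod, h.eq, Int.gcd_emod]

lemma le_two_mul_sq_of_ceil_sqrt_div_sqrt_two_le {N b : ℕ} (h : ⌈√(N : ℝ) / √2⌉₊ ≤ b) :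
    N ≤ 2 * b ^ 2 := by
  rw [Nat.ceil_le, ← Real.sqrt_div' _ (by norm_num), Real.sqrt_le_left (by positivity),
    div_le_iff₀ (by norm_num)] at h
  exact_mod_cast (by linarith : (N : ℝ) ≤ 2 * b ^ 2)

lemma div_sq_eq_one_of_coprime {N b : ℕ} (hN : 3 ≤ N) (hcop : b.Coprime N)
    (hlo : N ≤ 2 * b ^ 2) (hhi : b ^ 2 ≤ N) : N / b ^ 2 = 1 := by
  have hlt : N < 2 * b ^ 2 := by
    refine hlo.lt_of_ne fun hN2 => ?_
    obtain rfl : b = 1 := hcop.eq_one_of_dvd ⟨2 * b, by rw [hN2]; ring⟩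
    omega
  exact Nat.div_eq_of_lt_le (by simpa using hhi) (by linarith)

lemma div_succ_add_one_eq_div {N b : ℕ} (hsq : N / b ^ 2 = 1) (hdig : N / b % b ≤ N % b + 1) :
    N / (b + 1) + 1 = N / b := by
  have hb : 0 < b := Nat.pos_of_ne_zero (by rintro rfl; simp at hsq)
  have hq : N / b = b + N / b % b := by
    have := Nat.div_add_mod (N / b) b
    rw [Nat.div_div_eq_div_mul, ← sq, hsq] at this
    omega
  have hN := Nat.div_add_mod N b
  have hr := Nat.mod_lt N hb
  obtain ⟨q, hq'⟩ : ∃ q, N / b = q + 1 := ⟨N / b - 1, by omega⟩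
  rw [hq'] at hN ⊢
  have hbq : b ≤ q + 1 := by omega
  have hqr : q ≤ b + N % b := by omega
  suffices N / (b + 1) = q by omega
  apply Nat.div_eq_of_lt_le
  · linarith [show q * (b + 1) + b = b * (q + 1) + q by ring]
  · linarith [show (q + 1) * (b + 1) = b * (q + 1) + (q + 1) by ring]

lemma fin_eq_add_mul_of_succ {d : ℕ} (hd : 0 < d) (f : Fin d → ℤ) (c : ℤ)
    (h : ∀ i : Fin d, ∀ hi : (i : ℕ) + 1 < d, f ⟨i + 1, hi⟩ = f i + c) (i : Fin d) :
    f i = f ⟨0, hd⟩ + c * i := by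
  obtain ⟨n, hn⟩ := i
  induction n with
  | zero => simp
  | succ n ih =>
    rw [h ⟨n, by omega⟩ hn, ih (by omega)]
    push_cast
    ring

lemma modEq_neg_div_of_mul_modEq_mod {N b : ℕ} {x : ℤ} (hcop : b.Coprime N)
    (h : x * b ≡ (N % b : ℕ) [ZMOD N]) : x ≡ -(N / b : ℕ) [ZMOD N] := by
  rw [Int.modEq_iff_dvd] at h ⊢
  have hN : (N : ℤ) = b * (N / b : ℕ) + (N % b : ℕ) := by exact_mod_cast (Nat.div_add_mod N b).symm
  have hdvd : (N : ℤ) ∣ b * (-(N / b : ℕ) - x) := by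
    rw [show (b : ℤ) * (-(N / b : ℕ) - x) = ((N % b : ℕ) - x * b) - N by linear_combination hN]
    exact h.sub dvd_rfl
  exact (Nat.isCoprime_iff_coprime.mpr hcop).symm.dvd_of_dvd_mul_left hdvd

lemma exists_lt_dvd_add (D : ℕ) {g : ℕ} (hg : 0 < g) : ∃ z < g, g ∣ D + z := by
  rcases (D % g).eq_zero_or_pos with h0 | h0
  · exact ⟨0, hg, Nat.dvd_of_mod_eq_zero h0⟩
  · refine ⟨g - D % g, by omega, D / g + 1, ?_⟩
    have := Nat.div_add_mod D g
    have := Nat.mod_lt D hg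
    rw [Nat.mul_add]
    omega

lemma coprime_of_forall_coprime_add {N D L m : ℕ} (h : ∀ z < L, (D + z).Coprime N)
    (hm : 0 < m) (hmL : m ≤ L) : m.Coprime N := by
  obtain ⟨z, hz, hgz⟩ := exists_lt_dvd_add D (Nat.gcd_pos_of_pos_left N hm)
  have hgm := Nat.le_of_dvd hm (Nat.gcd_dvd_left m N)
  exact Nat.eq_one_of_dvd_coprimes (h z (by omega)) hgz (Nat.gcd_dvd_right m N)

theorem consecutive_bases_lemma (N d : ℕ) (hd : 0 < d)
    (hN9 : 9 ≤ N)
    (b : Fin d → ℕ)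
    (hconsec : ∀ i : Fin d, ∀ h : (i : ℕ) + 1 < d, b ⟨(i : ℕ) + 1, h⟩ = b i + 1)
    (hlo : ∀ i, ⌈Real.sqrt (N : ℝ) / Real.sqrt 2⌉₊ ≤ b i)
    (hhi : ∀ i, b i ≤ Nat.sqrt N)
    (hcop : ∀ i, Nat.Coprime (b i) N)
    (n0 n1 n2 : Fin d → ℕ)
    (hn0 : ∀ i, n0 i = N % b i)
    (hn1 : ∀ i, n1 i = (N / b i) % b i)
    (hn2 : ∀ i, n2 i = N / (b i) ^ 2)
    (D : ℕ) (hD : D = b ⟨0, hd⟩ + N / b ⟨d - 1, by omega⟩)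
    (hDz : ∀ z, z ≤ 2 * d - 2 → Nat.Coprime (D + z) N)
    (hdig : ∀ i, n1 i ≤ n0 i + 1)
    (bb : Fin d → ℕ)
    (hbb : ∀ i, bb i < N ∧ (N : ℤ) ∣ ((bb i : ℤ) * (b i : ℤ) - (n0 i : ℤ))) :
    (∀ i, n2 i = 1) ∧
      (∀ j k : Fin d, j ≠ k → Int.gcd ((b j : ℤ) - (b k : ℤ)) (N : ℤ) = 1) ∧
      (∀ j k : Fin d, j ≠ k → Int.gcd ((bb j : ℤ) - (bb k : ℤ)) (N : ℤ) = 1) ∧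
      (∀ j k : Fin d, Int.gcd ((b j : ℤ) - (bb k : ℤ)) (N : ℤ) = 1) := by
  have hsq i : N / b i ^ 2 = 1 := div_sq_eq_one_of_coprime (by omega) (hcop i)
    (le_two_mul_sq_of_ceil_sqrt_div_sqrt_two_le (hlo i)) (Nat.le_sqrt'.mp (hhi i))
  have hb := fin_eq_add_mul_of_succ hd (fun i => (b i : ℤ)) 1 (by exact_mod_cast hconsec)
  have hdiv := fin_eq_add_mul_of_succ hd (fun i => ((N / b i : ℕ) : ℤ)) (-1) fun i hi => by
    have := div_succ_add_one_eq_div (hsq i) (hn1 i ▸ hn0 i ▸ hdig i)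
    simp only [hconsec i hi]
    omega
  have hbb_neg_div i : (bb i : ℤ) ≡ -(N / b i : ℕ) [ZMOD N] :=
    modEq_neg_div_of_mul_modEq_mod (hcop i) (hn0 i ▸ (Int.modEq_iff_dvd.mpr (hbb i).2).symm)
  have hindex (j k : Fin d) (hjk : j ≠ k) : Int.gcd ((j : ℤ) - k) N = 1 :=
    coprime_of_forall_coprime_add (L := 2 * d - 1) (fun z hz => hDz z (by omega))
      (by have := Fin.val_ne_of_ne hjk; omega) (by omega)
  refine ⟨fun i => (hn2 i).trans (hsq i), fun j k hjk => ?_, fun j k hjk => ?_, fun j k => ?_⟩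
  · rw [hb j, hb k, add_sub_add_left_eq_sub, one_mul, one_mul]
    exact hindex j k hjk
  · rw [((hbb_neg_div j).sub (hbb_neg_div k)).gcd_eq, hdiv j, hdiv k]
    convert hindex j k hjk using 2
    ring
  · have hDjk : ((D + (d - 1 + j - k) : ℕ) : ℤ) = b j - -((N / b k : ℕ) : ℤ) := by
      have := hdiv ⟨d - 1, by omega⟩
      simp only at this
      rw [hD, hb j, hdiv k]
      push_cast
      omega
    rw [((Int.ModEq.refl _).sub (hbb_neg_div k)).gcd_eq, ← hDjk, Int.gcd_natCast_natCast]
    exact hDz _ (by omega)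
end

section
/- Let N ≥ 6 be a composite natural number and d := ⌈N^{1/4}⌉. Then the sets B = {N − n : 1 ≤ n ≤ d} and S = {(n−1)d : 1 ≤ n ≤ d} are disjoint d-element subsets of Z_N, and there exist i, j ∈ {1, ..., d} and a prime factor p of N such that N − i ≡ (j−1)d (mod p), i.e. p divides i + (j−1)d. -/
/-- For composite `N ≥ 6` and `d := ⌈N^{1/4}⌉`, the sets `B = {N − n : 1 ≤ n ≤ d}`
and `S = {(n−1)d : 1 ≤ n ≤ d}` are disjoint `d`-element subsets of `Z_N`, and there
are `i, j ∈ {1, ..., d}` and a prime factor `p` of `N` with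
`N − i ≡ (j−1)d (mod p)`, i.e. `p ∣ i + (j−1)d`. -/
theorem strassen_solution (N : ℕ) (hN : 6 ≤ N) (hcomp : ¬ N.Prime)
    (d : ℕ) (hd : d = ⌈(N : ℝ) ^ ((1 : ℝ) / 4)⌉₊) :
    (((Finset.Icc 1 d).image (fun n => N - n)).card = d) ∧
    (((Finset.Icc 1 d).image (fun n => (n - 1) * d)).card = d) ∧
    Disjoint ((Finset.Icc 1 d).image (fun n => N - n))
      ((Finset.Icc 1 d).image (fun n => (n - 1) * d)) ∧
    (∀ x ∈ (Finset.Icc 1 d).image (fun n => N - n), x < N) ∧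
    (∀ x ∈ (Finset.Icc 1 d).image (fun n => (n - 1) * d), x < N) ∧
    ∃ i ∈ Finset.Icc 1 d, ∃ j ∈ Finset.Icc 1 d, ∃ p : ℕ, p.Prime ∧ p ∣ N ∧
      ((N : ℤ) - (i : ℤ) ≡ ((j : ℤ) - 1) * (d : ℤ) [ZMOD (p : ℤ)]) ∧
      p ∣ i + (j - 1) * d := by
  have hNpos : (0:ℝ) < N := by positivity
  have hN4 : ((N:ℝ) ^ ((1:ℝ)/4)) ^ (4:ℕ) = N := by
    rw [← Real.rpow_natCast ((N:ℝ) ^ ((1:ℝ)/4)), ← Real.rpow_mul (le_of_lt hNpos)]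
    norm_num
  have hdge : ((N:ℝ) ^ ((1:ℝ)/4)) ≤ d := hd ▸ Nat.le_ceil _
  have hNd4 : N ≤ d^4 := by
    have h : (N:ℝ) ≤ (d:ℝ)^4 := by
      calc (N:ℝ) = ((N:ℝ) ^ ((1:ℝ)/4)) ^ (4:ℕ) := hN4.symm
      _ ≤ (d:ℝ)^4 := by
          apply pow_le_pow_left₀ (by positivity) hdge
    exact_mod_cast h
  have hd2 : 2 ≤ d := by
    rw [hd]
    have h0 : (1:ℕ) < N := by omega
    have h1 : (1:ℝ) < (N:ℝ)^((1:ℝ)/4) := by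
      apply (Real.one_lt_rpow_iff_of_pos hNpos).mpr
      exact Or.inl ⟨by exact_mod_cast h0, by norm_num⟩
    have := Nat.lt_ceil.mpr (show ((1:ℕ):ℝ) < (N:ℝ)^((1:ℝ)/4) by exact_mod_cast h1)
    omega
  have hd2N : d^2 < N := by
    rcases le_or_gt d 2 with h | h
    · nlinarith
    · obtain ⟨e, rfl⟩ : ∃ e, d = e + 1 := ⟨d - 1, by omega⟩
      have he2 : 2 ≤ e := by omega
      have h1 : ((e:ℕ):ℝ) < (N:ℝ)^((1:ℝ)/4) := Nat.lt_ceil.mp (by omega)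
      have h2 : ((e:ℕ):ℝ)^4 < ((N:ℝ)^((1:ℝ)/4))^(4:ℕ) :=
        pow_lt_pow_left₀ h1 (by positivity) (by norm_num)
      rw [hN4] at h2
      have h3 : e^4 < N := by exact_mod_cast h2
      nlinarith
  have hdN : d < N := by nlinarith
  have hsq : d^2 = d*d := sq d
  -- prime factor
  have hpp : N.minFac.Prime := Nat.minFac_prime (by omega)
  have hpN : N.minFac ∣ N := Nat.minFac_dvd N
  have hpsq : N.minFac ^ 2 ≤ N := Nat.minFac_sq_le_self (by omega) hcomp
  obtain ⟨q, hq⟩ : ∃ q, N.minFac = q + 1 := ⟨N.minFac - 1, by have := hpp.two_le; omega⟩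
  have hpd2 : N.minFac ≤ d^2 := by
    by_contra hc
    push_neg at hc
    have h1 : (d^2)^2 < N.minFac^2 := Nat.pow_lt_pow_left hc (by norm_num)
    have h2 : d^4 < N := by nlinarith
    omega
  have hdpos : 0 < d := by omega
  have hmod := Nat.mod_add_div q d
  have hmlt : q % d < d := Nat.mod_lt q hdpos
  have hjd : q / d < d := Nat.div_lt_of_lt_mul (by omega)
  have hpeq : (q % d + 1) + ((q / d + 1) - 1) * d = N.minFac := by
    have h : (q / d + 1) - 1 = q / d := rfl
    rw [h]
    have h2 : q / d * d = d * (q / d) := Nat.mul_comm _ _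
    omega
  refine ⟨?_, ?_, ?_, ?_, ?_, q % d + 1, ?_, q / d + 1, ?_, N.minFac, hpp, hpN, ?_,
    hpeq ▸ dvd_rfl⟩
  · rw [Finset.card_image_of_injOn, Nat.card_Icc]; · omega
    intro a ha b hb hab
    simp only [Finset.coe_Icc, Set.mem_Icc] at ha hb
    simp only at hab
    omega
  · rw [Finset.card_image_of_injOn, Nat.card_Icc]; · omega
    intro a ha b hb hab
    simp only [Finset.coe_Icc, Set.mem_Icc] at ha hb
    simp only at hab
    have := Nat.eq_of_mul_eq_mul_right hdpos hab
    omega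
  · rw [Finset.disjoint_left]
    rintro x hx hx'
    simp only [Finset.mem_image, Finset.mem_Icc] at hx hx'
    obtain ⟨n, hn, rfl⟩ := hx
    obtain ⟨m, hm, heq⟩ := hx'
    have h1 : (m-1)*d ≤ (d-1)*d := Nat.mul_le_mul_right d (show m-1 ≤ d-1 by omega)
    have h2 : (d-1)*d = d*d - 1*d := Nat.sub_mul d 1 d
    omega
  · intro x hx
    simp only [Finset.mem_image, Finset.mem_Icc] at hx
    obtain ⟨n, hn, rfl⟩ := hx
    omega
  · intro x hx
    simp only [Finset.mem_image, Finset.mem_Icc] at hx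
    obtain ⟨n, hn, rfl⟩ := hx
    have h1 : (n-1)*d ≤ (d-1)*d := Nat.mul_le_mul_right d (show n-1 ≤ d-1 by omega)
    have h2 : (d-1)*d = d*d - 1*d := Nat.sub_mul d 1 d
    omega
  · simp only [Finset.mem_Icc]
    have h0 : 0 ≤ q % d := Nat.zero_le _
    omega
  · simp only [Finset.mem_Icc]
    have h0 : 0 ≤ q / d := Nat.zero_le _
    omega
  · -- ZMOD congruence
    have hZ : ((q % d + 1 : ℕ):ℤ) + (((q / d + 1 : ℕ):ℤ) - 1) * (d:ℤ) = (N.minFac:ℤ) := by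
      have h := hpeq
      zify at h
      push_cast
      push_cast at h
      linear_combination h
    have hkey : (((q / d + 1 : ℕ):ℤ) - 1) * (d:ℤ) - ((N:ℤ) - ((q % d + 1 : ℕ):ℤ))
        = (N.minFac:ℤ) - (N:ℤ) := by linear_combination hZ
    have hdvd : (N.minFac:ℤ) ∣ (((q / d + 1 : ℕ):ℤ) - 1) * (d:ℤ) - ((N:ℤ) - ((q % d + 1 : ℕ):ℤ)) := by
      rw [hkey]
      exact dvd_sub dvd_rfl (Int.natCast_dvd_natCast.mpr hpN)
    exact Int.modEq_iff_dvd.mpr hdvd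
end

section
/- Let N be a natural number, p a prime divisor of N, and d ∈ ℕ with p ≤ d² and d² + d ≤ N. Then the sets B = {N − n : 1 ≤ n ≤ d} and S = {(n−1)d : 1 ≤ n ≤ d} are disjoint d-element subsets of Z_N, and there exist i, j ∈ {1, ..., d} such that N − i ≡ (j−1)d (mod p), i.e. p divides i + (j−1)d. -/
/-- Let `p` be a prime divisor of `N` with `p ≤ d²` and `d² + d ≤ N`. Then
`B = {N − n : 1 ≤ n ≤ d}` and `S = {(n−1)d : 1 ≤ n ≤ d}` are disjoint `d`-element
subsets of `Z_N`, and there are `i, j ∈ {1, ..., d}` with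
`N − i ≡ (j−1)d (mod p)`, i.e. `p ∣ i + (j−1)d`. -/
theorem strassen_solution_general (N p d : ℕ) (hp : p.Prime) (hpN : p ∣ N)
    (hpd : p ≤ d ^ 2) (hdN : d ^ 2 + d ≤ N) :
    (((Finset.Icc 1 d).image (fun n => N - n)).card = d) ∧
    (((Finset.Icc 1 d).image (fun n => (n - 1) * d)).card = d) ∧
    Disjoint ((Finset.Icc 1 d).image (fun n => N - n))
      ((Finset.Icc 1 d).image (fun n => (n - 1) * d)) ∧
    (∀ x ∈ (Finset.Icc 1 d).image (fun n => N - n), x < N) ∧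
    (∀ x ∈ (Finset.Icc 1 d).image (fun n => (n - 1) * d), x < N) ∧
    ∃ i ∈ Finset.Icc 1 d, ∃ j ∈ Finset.Icc 1 d,
      ((N : ℤ) - (i : ℤ) ≡ ((j : ℤ) - 1) * (d : ℤ) [ZMOD (p : ℤ)]) ∧
      p ∣ i + (j - 1) * d := by
  have hp2 := hp.two_le
  have hd1 : 1 ≤ d := by nlinarith
  have hdd : d ^ 2 = d * d := sq d
  have hSb : ∀ a ∈ Finset.Icc 1 d, (a - 1) * d + d ≤ d * d := by
    intro a ha
    simp only [Finset.mem_Icc] at ha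
    have h1 : (a - 1) * d ≤ (d - 1) * d := Nat.mul_le_mul_right d (by omega)
    have h2 : (d - 1) * d + d = d * d := by
      have h3 : d - 1 + 1 = d := by omega
      calc (d - 1) * d + d = (d - 1 + 1) * d := by ring
        _ = d * d := by rw [h3]
    omega
  refine ⟨?_, ?_, ?_, ?_, ?_, ?_⟩
  · rw [Finset.card_image_of_injOn, Nat.card_Icc]; · omega
    intro a ha b hb hab
    simp only [Finset.coe_Icc, Set.mem_Icc] at ha hb
    simp only at hab
    omega
  · rw [Finset.card_image_of_injOn, Nat.card_Icc]; · omega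
    intro a ha b hb hab
    simp only [Finset.coe_Icc, Set.mem_Icc] at ha hb
    simp only at hab
    rcases Nat.lt_trichotomy a b with h' | h' | h'
    · exfalso
      have := (Nat.mul_lt_mul_right (show 0 < d by omega)).mpr (show a - 1 < b - 1 by omega)
      omega
    · omega
    · exfalso
      have := (Nat.mul_lt_mul_right (show 0 < d by omega)).mpr (show b - 1 < a - 1 by omega)
      omega
  · rw [Finset.disjoint_left]
    rintro x hx hy
    simp only [Finset.mem_image, Finset.mem_Icc] at hx hy
    obtain ⟨a, ha, rfl⟩ := hx
    obtain ⟨b, hb, hxy⟩ := hy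
    have := hSb b (Finset.mem_Icc.mpr hb)
    omega
  · intro x hx
    simp only [Finset.mem_image, Finset.mem_Icc] at hx
    obtain ⟨a, ha, rfl⟩ := hx
    omega
  · intro x hx
    simp only [Finset.mem_image, Finset.mem_Icc] at hx
    obtain ⟨a, ha, rfl⟩ := hx
    have := hSb a (Finset.mem_Icc.mpr ha)
    omega
  · have key : ∃ i j, 1 ≤ i ∧ i ≤ d ∧ 1 ≤ j ∧ j ≤ d ∧ i + (j - 1) * d = p := by
      obtain ⟨q, r, hrd, hqr⟩ : ∃ q r, r < d ∧ q * d + r = p - 1 :=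
        ⟨(p - 1) / d, (p - 1) % d, Nat.mod_lt _ (by omega),
          by rw [Nat.mul_comm]; exact Nat.div_add_mod (p - 1) d⟩
      refine ⟨r + 1, q + 1, by omega, by omega, by omega, ?_, by
        simp only [Nat.add_sub_cancel]; omega⟩
      by_contra h
      have : d * d ≤ q * d := Nat.mul_le_mul_right d (by omega)
      omega
    obtain ⟨i, j, hi1, hid, hj1, hjd, hij⟩ := key
    refine ⟨i, Finset.mem_Icc.mpr ⟨hi1, hid⟩, j, Finset.mem_Icc.mpr ⟨hj1, hjd⟩, ?_, ?_⟩
    · rw [Int.modEq_iff_dvd]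
      have hN : (p : ℤ) ∣ (N : ℤ) := Int.natCast_dvd_natCast.mpr hpN
      have hP : ((j : ℤ) - 1) * d - ((N : ℤ) - (i : ℤ)) = (p : ℤ) - (N : ℤ) := by
        have h6 : ((i + (j - 1) * d : ℕ) : ℤ) = (p : ℤ) := by rw [hij]
        push_cast [Nat.cast_sub hj1] at h6
        linarith
      rw [hP]
      exact dvd_sub (dvd_refl _) hN
    · rw [hij]
end

section
/- Let N be a composite natural number and p a prime factor of N with p < b for some natural number b with 5b ≤ N. Let m, r be natural numbers with 2 ≤ m < p and r = p mod m, and set d := ⌈(b/m)^{1/2}⌉ (ceiling of the real square root of b/m). Then the sets B = {mdn + r : 1 ≤ n ≤ d} and S = {mn : 1 ≤ n ≤ d} are disjoint d-element subsets of Z_N, and there exist i, j ∈ {1, ..., d} such that mdi + r ≡ mj (mod p). -/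
/-- Let `N` be composite, `p` a prime factor of `N` with `p < b` for some `b` with
`5b ≤ N`, and `m, r ∈ ℕ` with `2 ≤ m < p` and `r = p mod m`. With
`d := ⌈√(b/m)⌉`, the sets `B = {mdn + r : 1 ≤ n ≤ d}` and `S = {mn : 1 ≤ n ≤ d}`
are disjoint `d`-element subsets of `Z_N`, and there exist `i, j ∈ {1, ..., d}`
with `mdi + r ≡ mj (mod p)`. -/
theorem residue_class_solution (N p b m r : ℕ) (hN : 1 < N) (hcomp : ¬ N.Prime)
    (hp : p.Prime) (hpN : p ∣ N) (hpb : p < b) (hbN : 5 * b ≤ N)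
    (hm2 : 2 ≤ m) (hmp : m < p) (hr : r = p % m)
    (d : ℕ) (hd : d = ⌈Real.sqrt ((b : ℝ) / (m : ℝ))⌉₊) :
    (((Finset.Icc 1 d).image (fun n => m * d * n + r)).card = d) ∧
    (((Finset.Icc 1 d).image (fun n => m * n)).card = d) ∧
    Disjoint ((Finset.Icc 1 d).image (fun n => m * d * n + r))
      ((Finset.Icc 1 d).image (fun n => m * n)) ∧
    (∀ x ∈ (Finset.Icc 1 d).image (fun n => m * d * n + r), x < N) ∧
    (∀ x ∈ (Finset.Icc 1 d).image (fun n => m * n), x < N) ∧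
    ∃ i ∈ Finset.Icc 1 d, ∃ j ∈ Finset.Icc 1 d,
      m * d * i + r ≡ m * j [MOD p] := by
  have hm0 : 0 < m := by omega
  have hrm : r < m := by rw [hr]; exact Nat.mod_lt _ hm0
  have hr0 : 0 < r := by
    rcases Nat.eq_zero_or_pos r with h0 | h; swap; · exact h
    exfalso
    have hdvd : m ∣ p := Nat.dvd_of_mod_eq_zero (by omega)
    rcases hp.eq_one_or_self_of_dvd m hdvd with h1 | h1 <;> omega
  -- real bounds on d
  have hmR : (0:ℝ) < (m:ℝ) := by exact_mod_cast hm0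
  have hbm0 : (0:ℝ) ≤ (b:ℝ)/(m:ℝ) := by positivity
  have hsle : Real.sqrt ((b:ℝ)/m) ≤ (d:ℝ) := by rw [hd]; exact Nat.le_ceil _
  have hslt : (d:ℝ) < Real.sqrt ((b:ℝ)/m) + 1 := by
    rw [hd]; exact Nat.ceil_lt_add_one (Real.sqrt_nonneg _)
  have hs2 : Real.sqrt ((b:ℝ)/m) ^ 2 = (b:ℝ)/m := Real.sq_sqrt hbm0
  set s : ℝ := Real.sqrt ((b:ℝ)/m) with hsdef
  have hs0 : 0 ≤ s := Real.sqrt_nonneg _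
  have hms2 : (m:ℝ) * s ^ 2 = b := by
    rw [hs2]; field_simp
  -- lower bound : b ≤ m * d * d
  have hbmdR : (b:ℝ) ≤ (m:ℝ) * d * d := by
    have hss : s * s ≤ (d:ℝ) * d := mul_le_mul hsle hsle hs0 (Nat.cast_nonneg d)
    nlinarith [mul_le_mul_of_nonneg_left hss hmR.le]
  have hbmd : b ≤ m * d * d := by exact_mod_cast hbmdR
  have hd1 : 1 ≤ d := by
    rcases Nat.eq_zero_or_pos d with h0 | h; · simp [h0] at hbmd; omega
    · exact h
  -- upper bound : m * d * d < 4 * b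
  have hmbR : (m:ℝ) < b := by exact_mod_cast (by omega : m < b)
  have hb0R : (0:ℝ) < (b:ℝ) := by exact_mod_cast (by omega : 0 < b)
  have hubR : (m:ℝ) * d * d < 4 * b := by
    have hmsb : ((m:ℝ) * s) * ((m:ℝ) * s) = (m:ℝ) * b := by rw [← hms2]; ring
    have hms : (m:ℝ) * s ≤ b := by
      nlinarith [hmsb, hmbR, hb0R, mul_nonneg hmR.le hs0]
    have hdd : (d:ℝ) * d < (s + 1) * (s + 1) :=
      mul_lt_mul'' hslt hslt (Nat.cast_nonneg d) (Nat.cast_nonneg d)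
    have := mul_lt_mul_of_pos_left hdd hmR
    nlinarith [this, hms, hmbR, hms2]
  have hub : m * d * d < 4 * b := by exact_mod_cast hubR
  have hbig : m * d * d + r < N := by omega
  have hmd0 : 0 < m * d := Nat.mul_pos hm0 hd1
  -- the q decomposition
  set q : ℕ := p / m with hqdef
  have hq : m * q + r = p := by rw [hr, hqdef]; exact Nat.div_add_mod p m
  have hqdd : q < d * d := by
    have : m * q < m * (d * d) := by
      calc m * q ≤ p := by omega
        _ < b := hpb
        _ ≤ m * (d * d) := by rw [← Nat.mul_assoc]; exact hbmd
    exact Nat.lt_of_mul_lt_mul_left this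
  set a : ℕ := q / d with hadef
  set t : ℕ := q % d with htdef
  have hq2 : d * a + t = q := Nat.div_add_mod q d
  have htd : t < d := Nat.mod_lt _ (by omega)
  have had : a < d := by
    rw [hadef]
    exact Nat.div_lt_of_lt_mul (by omega)
  refine ⟨?_, ?_, ?_, ?_, ?_, ?_⟩
  · rw [Finset.card_image_of_injective _ ?_, Nat.card_Icc]
    · omega
    · intro x y h
      simp only at h
      exact Nat.eq_of_mul_eq_mul_left hmd0 (by omega)
  · rw [Finset.card_image_of_injective _ ?_, Nat.card_Icc]
    · omega
    · intro x y h
      simp only at h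
      exact Nat.eq_of_mul_eq_mul_left hm0 h
  · rw [Finset.disjoint_left]
    rintro x hx hx'
    simp only [Finset.mem_image, Finset.mem_Icc] at hx hx'
    obtain ⟨n1, hn1, e1⟩ := hx
    obtain ⟨n2, hn2, e2⟩ := hx'
    rw [← e2] at e1
    have hc := congrArg (· % m) e1
    simp only [Nat.mul_assoc, Nat.mul_add_mod, Nat.mul_mod_right,
      Nat.mod_eq_of_lt hrm] at hc
    omega
  · intro x hx
    simp only [Finset.mem_image, Finset.mem_Icc] at hx
    obtain ⟨n, hn, rfl⟩ := hx
    have : m * d * n ≤ m * d * d := Nat.mul_le_mul_left _ hn.2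
    omega
  · intro x hx
    simp only [Finset.mem_image, Finset.mem_Icc] at hx
    obtain ⟨n, hn, rfl⟩ := hx
    have h1 : m * n ≤ m * d := Nat.mul_le_mul_left _ hn.2
    have h2 : m * d * 1 ≤ m * d * d := Nat.mul_le_mul_left _ hd1
    omega
  · obtain ⟨j, hj⟩ : ∃ j, d = j + t := ⟨d - t, by omega⟩
    refine ⟨a + 1, by simp [Finset.mem_Icc]; omega, j, by simp [Finset.mem_Icc]; omega, ?_⟩
    have h1 : m * d * (a + 1) = m * (d * a + t) + m * j := by rw [hj]; ring
    have key : m * d * (a + 1) + r = m * j + p := by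
      rw [h1, hq2, ← hq]; ring
    show (m * d * (a + 1) + r) % p = (m * j) % p
    rw [key, Nat.add_mod_right]
end

section
/- Let N be a composite natural number and p a prime factor of N with p ≤ b for some natural number b with 5b ≤ N. Let r, m be natural numbers with 2 ≤ m < p, gcd(N, m) = 1, and r = p mod m, and set d := ⌈(b/m)^{1/2}⌉ (ceiling of the real square root of b/m). Let m^{−1} denote the inverse of m modulo N. Then the sets B = {(m^{−1}r − n) mod N : 1 ≤ n ≤ d} and S = {(−dn) mod N : 1 ≤ n ≤ d} are disjoint d-element subsets of Z_N, and there exist i, j ∈ {1, ..., d} such that m^{−1}r − j ≡ −di (mod p). -/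
set_option maxHeartbeats 1000000 in
/-- Let `N` be composite, `p` a prime factor of `N` with `p ≤ b` for some `b` with
`5b ≤ N`, and `r, m ∈ ℕ` with `2 ≤ m < p`, `gcd(N, m) = 1` and `r = p mod m`. Let
`d := ⌈√(b/m)⌉` and let `minv` be the inverse of `m` modulo `N`. Then the sets
`B = {(m⁻¹r − n) mod N : 1 ≤ n ≤ d}` and `S = {(−dn) mod N : 1 ≤ n ≤ d}` are
disjoint `d`-element subsets of `Z_N`, and there exist `i, j ∈ {1, ..., d}` with
`m⁻¹r − j ≡ −di (mod p)`. -/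
theorem residue_class_solution' (N p b m r : ℕ) (hN : 1 < N) (hcomp : ¬ N.Prime)
    (hp : p.Prime) (hpN : p ∣ N) (hpb : p ≤ b) (hbN : 5 * b ≤ N)
    (hm2 : 2 ≤ m) (hmp : m < p) (hNm : Nat.Coprime N m) (hr : r = p % m)
    (d : ℕ) (hd : d = ⌈Real.sqrt ((b : ℝ) / (m : ℝ))⌉₊)
    (minv : ℕ) (hminv : minv < N ∧ m * minv ≡ 1 [MOD N]) :
    (((Finset.Icc 1 d).image
        (fun (n : ℕ) => ((((minv : ℤ) * (r : ℤ)) - ((n : ℕ) : ℤ)) % (N : ℤ)).toNat)).card = d) ∧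
    (((Finset.Icc 1 d).image
        (fun (n : ℕ) => ((-((d : ℤ) * ((n : ℕ) : ℤ))) % (N : ℤ)).toNat)).card = d) ∧
    Disjoint
      ((Finset.Icc 1 d).image
        (fun (n : ℕ) => ((((minv : ℤ) * (r : ℤ)) - ((n : ℕ) : ℤ)) % (N : ℤ)).toNat))
      ((Finset.Icc 1 d).image
        (fun (n : ℕ) => ((-((d : ℤ) * ((n : ℕ) : ℤ))) % (N : ℤ)).toNat)) ∧
    (∀ x ∈ (Finset.Icc 1 d).image
        (fun (n : ℕ) => ((((minv : ℤ) * (r : ℤ)) - ((n : ℕ) : ℤ)) % (N : ℤ)).toNat), x < N) ∧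
    (∀ x ∈ (Finset.Icc 1 d).image
        (fun (n : ℕ) => ((-((d : ℤ) * ((n : ℕ) : ℤ))) % (N : ℤ)).toNat), x < N) ∧
    ∃ i ∈ Finset.Icc 1 d, ∃ j ∈ Finset.Icc 1 d,
      ((minv : ℤ) * (r : ℤ) - (j : ℤ)) ≡ -((d : ℤ) * (i : ℤ)) [ZMOD (p : ℤ)] := by
  have hm0 : 0 < m := by omega
  have hb3 : 3 ≤ b := by omega
  have hN0 : (0:ℤ) < N := by exact_mod_cast (by omega : 0 < N)
  have hNne : (N:ℤ) ≠ 0 := by omega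
  -- positivity of b/m
  have hbm0 : (0:ℝ) < (b:ℝ) / (m:ℝ) := by
    apply div_pos <;> [exact_mod_cast (by omega : 0 < b); exact_mod_cast hm0]
  have hd1 : 1 ≤ d := by
    rw [hd]; exact Nat.one_le_ceil_iff.mpr (Real.sqrt_pos.mpr hbm0)
  -- key size bounds
  have hmd2N : m * d ^ 2 < N := by
    have hs0 : (0:ℝ) ≤ Real.sqrt ((b:ℝ)/(m:ℝ)) := Real.sqrt_nonneg _
    have hsq : Real.sqrt ((b:ℝ)/(m:ℝ)) ^ 2 = (b:ℝ)/(m:ℝ) := Real.sq_sqrt hbm0.le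
    have hdlt : (d:ℝ) < Real.sqrt ((b:ℝ)/(m:ℝ)) + 1 := by
      rw [hd]; exact Nat.ceil_lt_add_one (Real.sqrt_nonneg _)
    have hmR : (0:ℝ) < m := by exact_mod_cast hm0
    have hms : (m:ℝ) * Real.sqrt ((b:ℝ)/(m:ℝ)) ^ 2 = b := by
      rw [hsq]; field_simp
    have hmb : (m:ℝ) ≤ b := by exact_mod_cast (by omega : m ≤ b)
    have hbR : (0:ℝ) < b := by exact_mod_cast (by omega : 0 < b)
    have h4 : (m:ℝ) * (d:ℝ) ^ 2 < 4 * b := by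
      have hd2 : (d:ℝ)^2 < (Real.sqrt ((b:ℝ)/(m:ℝ)) + 1)^2 := by
        have : (0:ℝ) ≤ (d:ℝ) := by positivity
        nlinarith
      have hmsb : (m:ℝ) * Real.sqrt ((b:ℝ)/(m:ℝ)) ≤ b := by
        nlinarith [sq_nonneg ((m:ℝ) * Real.sqrt ((b:ℝ)/(m:ℝ)) - b)]
      nlinarith
    have : (m:ℝ) * (d:ℝ)^2 < (N:ℝ) := by
      have h5 : (4:ℝ) * b < 5 * b := by linarith
      have hNb : (5:ℝ) * b ≤ N := by exact_mod_cast hbN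
      linarith
    exact_mod_cast this
  have hbmd2 : b ≤ m * d ^ 2 := by
    have hs : Real.sqrt ((b:ℝ)/(m:ℝ)) ≤ (d:ℝ) := by rw [hd]; exact Nat.le_ceil _
    have hsq : Real.sqrt ((b:ℝ)/(m:ℝ)) ^ 2 = (b:ℝ)/(m:ℝ) := Real.sq_sqrt hbm0.le
    have : (b:ℝ) ≤ (m:ℝ) * (d:ℝ)^2 := by
      have hmR : (0:ℝ) < m := by exact_mod_cast hm0
      have h1 : (b:ℝ)/(m:ℝ) ≤ (d:ℝ)^2 := by nlinarith [Real.sqrt_nonneg ((b:ℝ)/(m:ℝ))]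
      rw [div_le_iff₀ hmR] at h1; linarith
    exact_mod_cast this
  have hdN : d < N := by nlinarith
  -- r bounds
  have hr1 : 1 ≤ r := by
    rcases Nat.eq_zero_or_pos r with h0 | h; swap; · omega
    exfalso
    have : m ∣ p := Nat.dvd_of_mod_eq_zero (by omega)
    rcases (Nat.Prime.eq_one_or_self_of_dvd hp m this) with h | h <;> omega
  have hrm : r < m := by rw [hr]; exact Nat.mod_lt _ hm0
  -- m * minv ≡ 1 as integers
  have hmm1 : ((m:ℤ) * minv) ≡ 1 [ZMOD (N:ℤ)] := by
    have := hminv.2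
    exact_mod_cast (Int.natCast_modEq_iff.mpr this)
  -- injectivity / cardинality of B
  have cardB : (((Finset.Icc 1 d).image
      (fun (n : ℕ) => ((((minv : ℤ) * (r : ℤ)) - ((n : ℕ) : ℤ)) % (N : ℤ)).toNat)).card = d) := by
    rw [Finset.card_image_of_injOn, Nat.card_Icc]
    · omega
    intro n₁ h₁ n₂ h₂ h
    dsimp only at h
    simp only [Finset.coe_Icc, Set.mem_Icc] at h₁ h₂
    have e1 : (0:ℤ) ≤ ((minv:ℤ) * r - n₁) % N := Int.emod_nonneg _ hNne
    have e2 : (0:ℤ) ≤ ((minv:ℤ) * r - n₂) % N := Int.emod_nonneg _ hNne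
    have he : ((minv:ℤ) * r - n₁) % N = ((minv:ℤ) * r - n₂) % N := by omega
    have hdvd : (N:ℤ) ∣ ((minv:ℤ) * r - n₂) - ((minv:ℤ) * r - n₁) := Int.ModEq.dvd he
    have : ((minv:ℤ) * r - n₂) - ((minv:ℤ) * r - n₁) = (n₁:ℤ) - n₂ := by ring
    rw [this] at hdvd
    have := Int.eq_zero_of_abs_lt_dvd hdvd (by
      rw [abs_lt]; constructor <;> [push_cast; push_cast] <;> omega)
    omega
  have cardS : (((Finset.Icc 1 d).image
      (fun (n : ℕ) => ((-((d : ℤ) * ((n : ℕ) : ℤ))) % (N : ℤ)).toNat)).card = d) := by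
    rw [Finset.card_image_of_injOn, Nat.card_Icc]
    · omega
    intro n₁ h₁ n₂ h₂ h
    dsimp only at h
    simp only [Finset.coe_Icc, Set.mem_Icc] at h₁ h₂
    have e1 : (0:ℤ) ≤ (-((d:ℤ) * n₁)) % N := Int.emod_nonneg _ hNne
    have e2 : (0:ℤ) ≤ (-((d:ℤ) * n₂)) % N := Int.emod_nonneg _ hNne
    have he : (-((d:ℤ) * n₁)) % N = (-((d:ℤ) * n₂)) % N := by omega
    have hdvd : (N:ℤ) ∣ (-((d:ℤ) * n₂)) - (-((d:ℤ) * n₁)) := Int.ModEq.dvd he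
    have heq : (-((d:ℤ) * n₂)) - (-((d:ℤ) * n₁)) = (d:ℤ) * ((n₁:ℤ) - n₂) := by ring
    rw [heq] at hdvd
    have hlt : |(d:ℤ) * ((n₁:ℤ) - n₂)| < N := by
      rw [abs_mul]
      have hd0 : |(d:ℤ)| = d := abs_of_nonneg (by positivity)
      rw [hd0]
      have : |(n₁:ℤ) - n₂| ≤ (d:ℤ) - 1 := by rw [abs_le]; push_cast; omega
      have hdd : (d:ℤ) * ((d:ℤ) - 1) < N := by
        have : (m:ℤ) * (d:ℤ)^2 < N := by exact_mod_cast hmd2N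
        have hm2' : (2:ℤ) ≤ m := by exact_mod_cast hm2
        nlinarith
      calc (d:ℤ) * |(n₁:ℤ) - n₂| ≤ (d:ℤ) * ((d:ℤ) - 1) := by
            apply mul_le_mul_of_nonneg_left this (by positivity)
        _ < N := hdd
    have := Int.eq_zero_of_abs_lt_dvd hdvd hlt
    have hd0 : (d:ℤ) ≠ 0 := by exact_mod_cast (by omega : d ≠ 0)
    have : (n₁:ℤ) - n₂ = 0 := by
      rcases mul_eq_zero.mp this with h | h
      · exact absurd h hd0
      · exact h
    omega
  refine ⟨cardB, cardS, ?_, ?_, ?_, ?_⟩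
  · -- disjoint
    rw [Finset.disjoint_left]
    intro x hx hy
    simp only [Finset.mem_image, Finset.mem_Icc] at hx hy
    obtain ⟨n₁, hn₁, hfx⟩ := hx
    obtain ⟨n₂, hn₂, hgx⟩ := hy
    have e1 : (0:ℤ) ≤ ((minv:ℤ) * r - n₁) % N := Int.emod_nonneg _ hNne
    have e2 : (0:ℤ) ≤ (-((d:ℤ) * n₂)) % N := Int.emod_nonneg _ hNne
    have he : ((minv:ℤ) * r - n₁) % N = (-((d:ℤ) * n₂)) % N := by omega
    have hdvd : (N:ℤ) ∣ (-((d:ℤ) * n₂)) - ((minv:ℤ) * r - n₁) := Int.ModEq.dvd he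
    -- multiply by m
    have hdvd2 : (N:ℤ) ∣ (m:ℤ) * ((-((d:ℤ) * n₂)) - ((minv:ℤ) * r - n₁)) :=
      Dvd.dvd.mul_left hdvd _
    have hdvd3 : (N:ℤ) ∣ ((m:ℤ) * minv - 1) * r := by
      have := Int.ModEq.dvd hmm1
      have h2 : (N:ℤ) ∣ (m:ℤ) * minv - 1 := by
        have heq : ((1:ℤ) - (m:ℤ) * minv) = -((m:ℤ) * minv - 1) := by ring
        rw [heq] at this
        exact (Int.dvd_neg).mp this
      exact h2.mul_right _
    have hdvd4 : (N:ℤ) ∣ -((r:ℤ) - (m:ℤ) * n₁ + (m:ℤ) * d * n₂) := by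
      have heq : -((r:ℤ) - (m:ℤ) * n₁ + (m:ℤ) * d * n₂)
          = (m:ℤ) * ((-((d:ℤ) * n₂)) - ((minv:ℤ) * r - n₁)) + ((m:ℤ) * minv - 1) * r := by
        ring
      rw [heq]
      exact dvd_add hdvd2 hdvd3
    have hdvd5 : (N:ℤ) ∣ ((r:ℤ) - (m:ℤ) * n₁ + (m:ℤ) * d * n₂) := (Int.dvd_neg).mp hdvd4
    -- but 0 < V < N
    have hpos : 0 < (r:ℤ) - (m:ℤ) * n₁ + (m:ℤ) * d * n₂ := by
      have h1 : (m:ℤ) * n₁ ≤ (m:ℤ) * d := by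
        apply mul_le_mul_of_nonneg_left _ (by positivity)
        exact_mod_cast hn₁.2
      have h2 : (m:ℤ) * d ≤ (m:ℤ) * d * n₂ :=
        le_mul_of_one_le_right (by positivity) (by exact_mod_cast hn₂.1)
      have : (1:ℤ) ≤ r := by exact_mod_cast hr1
      linarith
    have hlt : (r:ℤ) - (m:ℤ) * n₁ + (m:ℤ) * d * n₂ < N := by
      have h1 : (1:ℤ) ≤ n₁ := by exact_mod_cast hn₁.1
      have h2 : (n₂:ℤ) ≤ d := by exact_mod_cast hn₂.2
      have h3 : (m:ℤ) * d * n₂ ≤ (m:ℤ) * d * d := by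
        apply mul_le_mul_of_nonneg_left h2 (by positivity)
      have h4 : (m:ℤ) * d ^ 2 < N := by exact_mod_cast hmd2N
      have h5 : (r:ℤ) < m := by exact_mod_cast hrm
      have hm1 : (1:ℤ) ≤ m := by exact_mod_cast hm0
      nlinarith
    have := Int.le_of_dvd hpos hdvd5
    omega
  · intro x hx
    simp only [Finset.mem_image] at hx
    obtain ⟨n, _, hfx⟩ := hx
    have := Int.emod_lt_of_pos ((minv:ℤ) * r - n) hN0
    have := Int.emod_nonneg ((minv:ℤ) * r - n) hNne
    omega
  · intro x hx
    simp only [Finset.mem_image] at hx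
    obtain ⟨n, _, hfx⟩ := hx
    have := Int.emod_lt_of_pos (-((d:ℤ) * n)) hN0
    have := Int.emod_nonneg (-((d:ℤ) * n)) hNne
    omega
  · -- existence
    obtain ⟨q, hq⟩ : ∃ q, q = p / m := ⟨_, rfl⟩
    have hpqr : m * q + r = p := by rw [hq, hr]; exact Nat.div_add_mod p m
    have hqd2 : q < d ^ 2 := by
      have h1 : m * q < b := by omega
      have h2 : m * q < m * d ^ 2 := lt_of_lt_of_le h1 hbmd2
      exact lt_of_mul_lt_mul_left h2 (by omega)
    have hd0 : 0 < d := hd1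
    have hqdd : q / d < d := by
      rw [Nat.div_lt_iff_lt_mul hd0]
      calc q < d ^ 2 := hqd2
        _ = d * d := sq d
    have hdm : d * (q / d) + q % d = q := Nat.div_add_mod q d
    have hqr : q % d < d := Nat.mod_lt _ hd0
    obtain ⟨i, hi⟩ : ∃ i, i = q / d + 1 := ⟨_, rfl⟩
    obtain ⟨j, hj⟩ : ∃ j, j = d - q % d := ⟨_, rfl⟩
    have hi_mem : i ∈ Finset.Icc 1 d := by
      rw [Finset.mem_Icc, hi]; exact ⟨Nat.succ_le_succ (Nat.zero_le _), hqdd⟩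
    have hj_mem : j ∈ Finset.Icc 1 d := by
      rw [Finset.mem_Icc, hj]; exact ⟨Nat.sub_pos_of_lt hqr, Nat.sub_le _ _⟩
    refine ⟨i, hi_mem, j, hj_mem, ?_⟩
    have hdij : d * i = q + j := by
      have e : d * i = d * (q / d) + d := by rw [hi]; ring
      omega
    have hgcd : Int.gcd (p:ℤ) (m:ℤ) = 1 := by
      have : Nat.Coprime p m := (Nat.Prime.coprime_iff_not_dvd hp).mpr
        (fun h => absurd (Nat.le_of_dvd hm0 h) (not_le.mpr hmp))
      simpa [Int.gcd_natCast_natCast] using this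
    have key : (m:ℤ) * ((minv:ℤ) * r - j) ≡ (m:ℤ) * (-((d:ℤ) * i)) [ZMOD (p:ℤ)] := by
      have hmm1p : ((m:ℤ) * minv) ≡ 1 [ZMOD (p:ℤ)] :=
        Int.ModEq.of_dvd (by exact_mod_cast hpN) hmm1
      have h2 : (m:ℤ) * minv * r ≡ r [ZMOD (p:ℤ)] := by
        simpa using hmm1p.mul_right (r:ℤ)
      have h3 : (m:ℤ) * minv * r - (m:ℤ) * j ≡ (r:ℤ) - (m:ℤ) * j [ZMOD (p:ℤ)] :=
        h2.sub_right _
      have h4 : (r:ℤ) - (m:ℤ) * j ≡ -((m:ℤ) * d * i) [ZMOD (p:ℤ)] := by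
        rw [Int.modEq_iff_dvd]
        have hdij' : (d:ℤ) * i = (q:ℤ) + (j:ℤ) := by exact_mod_cast hdij
        have hpqr' : (m:ℤ) * q + r = p := by exact_mod_cast hpqr
        have heq : -((m:ℤ) * d * i) - ((r:ℤ) - (m:ℤ) * j) = -(p:ℤ) := by
          linear_combination (-(m:ℤ)) * hdij' - hpqr'
        rw [heq]
        exact dvd_neg.mpr dvd_rfl
      have e1 : (m:ℤ) * ((minv:ℤ) * r - j) = (m:ℤ) * minv * r - (m:ℤ) * j := by ring
      have e2 : (m:ℤ) * (-((d:ℤ) * i)) = -((m:ℤ) * d * i) := by ring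
      rw [e1, e2]
      exact h3.trans h4
    have := Int.ModEq.cancel_left_div_gcd
      (show (0:ℤ) < p by exact_mod_cast hp.pos) key
    rwa [hgcd, Int.natCast_one, Int.ediv_one] at this
end

section
/- Let N > 1 be an odd natural number which is either prime or has at least two distinct prime factors. Let b ∈ ℤ and let f ∈ ℤ[X] be a digit polynomial of N to base b (i.e. f(b) = N) such that gcd(lc f, N) = 1 and d := deg f is smaller than q := max{q' prime : q' ∣ N}, the largest prime factor of N. Then N is prime if and only if for every x ∈ Z_N, f(x)^{N−1} mod N ∈ {0, 1}. -/
/-- Fermat-type primality characterization via digit polynomials: let `N > 1` be odd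
and either prime or with at least two distinct prime factors. Let `f ∈ ℤ[X]` with
`f(b) = N`, `gcd(lc f, N) = 1`, and `deg f` smaller than the largest prime factor
`q` of `N`. Then `N` is prime iff `f(x)^{N−1} mod N ∈ {0, 1}` for all `x ∈ Z_N`. -/
theorem primality_characterization (N : ℕ) (hN1 : 1 < N) (hodd : Odd N)
    (hcases : N.Prime ∨ 2 ≤ N.primeFactors.card)
    (b : ℤ) (f : Polynomial ℤ) (hf : f.eval b = (N : ℤ))
    (hlc : Int.gcd f.leadingCoeff (N : ℤ) = 1)
    (q : ℕ) (hq : q.Prime) (hqN : q ∣ N)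
    (hqmax : ∀ q' : ℕ, q'.Prime → q' ∣ N → q' ≤ q)
    (hdeg : f.natDegree < q) :
    N.Prime ↔ ∀ x ∈ Finset.range N,
      (f.eval ((x : ℕ) : ℤ)) ^ (N - 1) % (N : ℤ) = 0 ∨
      (f.eval ((x : ℕ) : ℤ)) ^ (N - 1) % (N : ℤ) = 1 := by
  have hN0 : N ≠ 0 := by omega
  have hNsub : N - 1 ≠ 0 := by omega
  -- key casting lemma
  have key : ∀ (m : ℕ) (a : ℤ),
      ((f.eval a : ℤ) : ZMod m)
        = (f.map (Int.castRingHom (ZMod m))).eval ((a : ZMod m)) := by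
    intro m a
    rw [Polynomial.eval_map]
    have := Polynomial.eval₂_hom (Int.castRingHom (ZMod m)) a (p := f)
    simpa using this.symm
  constructor
  · -- forward direction
    intro hNp x hx
    haveI : Fact N.Prime := ⟨hNp⟩
    set a := f.eval ((x : ℕ) : ℤ) with ha
    by_cases hc : ((a : ZMod N) = 0)
    · left
      have hdvd : (N : ℤ) ∣ a := by
        rwa [ZMod.intCast_zmod_eq_zero_iff_dvd] at hc
      exact Int.emod_eq_zero_of_dvd (dvd_pow hdvd hNsub)
    · right
      have h1 : (a : ZMod N) ^ (N - 1) = 1 := ZMod.pow_card_sub_one_eq_one hc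
      have h2 : ((a ^ (N - 1) : ℤ) : ZMod N) = ((1 : ℤ) : ZMod N) := by
        push_cast
        simpa using h1
      have hmod : a ^ (N - 1) ≡ 1 [ZMOD N] := (ZMod.intCast_eq_intCast_iff _ _ _).mp h2
      have : a ^ (N - 1) % (N : ℤ) = 1 % (N : ℤ) := hmod
      rw [this]
      exact Int.emod_eq_of_lt (by norm_num) (by exact_mod_cast hN1)
  · -- backward direction
    intro h
    rcases hcases with hNp | hcard
    · exact hNp
    by_contra hNp
    haveI : Fact q.Prime := ⟨hq⟩
    have hq_mem : q ∈ N.primeFactors := Nat.mem_primeFactors.mpr ⟨hq, hqN, hN0⟩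
    obtain ⟨p, hpmem, hpq⟩ := Finset.exists_mem_ne hcard q
    obtain ⟨hp, hpN, -⟩ := Nat.mem_primeFactors.mp hpmem
    haveI : Fact p.Prime := ⟨hp⟩
    have hco : Nat.Coprime q p := (Nat.coprime_primes hq hp).mpr (Ne.symm hpq)
    -- normalized hypothesis
    have H : ∀ x : ℕ, (((f.eval ((x : ℕ) : ℤ) : ℤ) : ZMod N)) ^ (N - 1) = 0 ∨
        (((f.eval ((x : ℕ) : ℤ) : ℤ) : ZMod N)) ^ (N - 1) = 1 := by
      intro x
      have hmem : x % N ∈ Finset.range N := Finset.mem_range.mpr (Nat.mod_lt _ (by omega))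
      have hcasts : (((f.eval (((x % N : ℕ)) : ℤ) : ℤ) : ZMod N)) = (((f.eval ((x : ℕ) : ℤ) : ℤ) : ZMod N)) := by
        rw [key, key]
        congr 1
        push_cast
        simp [ZMod.natCast_self]
      rcases h (x % N) hmem with h0 | h1
      · left
        have hdvd : (N : ℤ) ∣ (f.eval (((x % N : ℕ)) : ℤ)) ^ (N - 1) :=
          Int.dvd_of_emod_eq_zero h0
        have : (((f.eval (((x % N : ℕ)) : ℤ)) ^ (N - 1) : ℤ) : ZMod N) = 0 :=
          (ZMod.intCast_zmod_eq_zero_iff_dvd _ _).mpr hdvd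
        rw [← hcasts]
        push_cast at this ⊢
        exact this
      · right
        have hmod : (f.eval (((x % N : ℕ)) : ℤ)) ^ (N - 1) ≡ 1 [ZMOD N] := by
          unfold Int.ModEq
          rw [h1]
          exact (Int.emod_eq_of_lt (by norm_num) (by exact_mod_cast hN1)).symm
        have : (((f.eval (((x % N : ℕ)) : ℤ)) ^ (N - 1) : ℤ) : ZMod N) = ((1 : ℤ) : ZMod N) :=
          (ZMod.intCast_eq_intCast_iff _ _ _).mpr hmod
        rw [← hcasts]
        push_cast at this ⊢
        simpa using this
    -- step 1 : leading coefficient nonzero mod q, and a point where f is nonzero mod q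
    set g : Polynomial (ZMod q) := f.map (Int.castRingHom (ZMod q)) with hg
    have hlcq : (f.leadingCoeff : ZMod q) ≠ 0 := by
      intro h0
      have hdvd : (q : ℤ) ∣ f.leadingCoeff := (ZMod.intCast_zmod_eq_zero_iff_dvd _ _).mp h0
      have hcop : IsCoprime f.leadingCoeff ((N : ℕ) : ℤ) := Int.isCoprime_iff_gcd_eq_one.mpr hlc
      have hu : IsUnit ((q : ℕ) : ℤ) :=
        hcop.isUnit_of_dvd' hdvd (Int.natCast_dvd_natCast.mpr hqN)
      exact (Nat.prime_iff_prime_int.mp hq).not_unit hu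
    have hg0 : g ≠ 0 := by
      intro h0
      apply hlcq
      have : g.coeff f.natDegree = (f.leadingCoeff : ZMod q) := by
        rw [hg, Polynomial.coeff_map]
        rfl
      rw [← this, h0, Polynomial.coeff_zero]
    have hgdeg : g.natDegree < q := lt_of_le_of_lt (Polynomial.natDegree_map_le) hdeg
    obtain ⟨x₀, hx₀⟩ : ∃ x₀ : ZMod q, g.eval x₀ ≠ 0 := by
      apply Polynomial.exists_eval_ne_zero_of_natDegree_lt_card g hg0
      rw [Cardinal.mk_fintype, ZMod.card]
      exact_mod_cast hgdeg
    -- step 2 : f has no roots mod p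
    have step2 : ∀ y : ℕ, (((f.eval ((y : ℕ) : ℤ) : ℤ) : ZMod p)) ≠ 0 := by
      intro y hy0
      obtain ⟨x, hxq, hxp⟩ := Nat.chineseRemainder hco x₀.val y
      have hxq' : ((x : ℕ) : ZMod q) = x₀ := by
        have := (ZMod.natCast_eq_natCast_iff _ _ _).mpr hxq
        rwa [ZMod.natCast_val, ZMod.cast_id] at this
      have hxp' : ((x : ℕ) : ZMod p) = ((y : ℕ) : ZMod p) :=
        (ZMod.natCast_eq_natCast_iff _ _ _).mpr hxp
      have hfxq : (((f.eval ((x : ℕ) : ℤ) : ℤ) : ZMod q)) ≠ 0 := by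
        rw [key]
        push_cast
        rw [hxq']
        exact hx₀
      rcases H x with h0 | h1
      · -- contradiction with nonvanishing mod q
        apply hfxq
        have := congrArg (ZMod.castHom hqN (ZMod q)) h0
        rw [map_pow, map_zero] at this
        have hcast : (ZMod.castHom hqN (ZMod q)) (((f.eval ((x : ℕ) : ℤ) : ℤ) : ZMod N))
            = (((f.eval ((x : ℕ) : ℤ) : ℤ) : ZMod q)) := map_intCast _ _
        rw [hcast] at this
        exact pow_eq_zero_iff hNsub |>.mp this
      · -- contradiction with vanishing at y mod p
        have := congrArg (ZMod.castHom hpN (ZMod p)) h1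
        rw [map_pow, map_one] at this
        have hcast : (ZMod.castHom hpN (ZMod p)) (((f.eval ((x : ℕ) : ℤ) : ℤ) : ZMod N))
            = (((f.eval ((x : ℕ) : ℤ) : ℤ) : ZMod p)) := map_intCast _ _
        rw [hcast] at this
        have hfxp : (((f.eval ((x : ℕ) : ℤ) : ℤ) : ZMod p)) = 0 := by
          rw [key] at hy0 ⊢
          push_cast at hy0 ⊢
          rw [hxp']
          exact hy0
        rw [hfxp, zero_pow hNsub] at this
        exact zero_ne_one this
    -- step 3 : take x ≡ b mod q
    set x3 : ℕ := (b % (q : ℤ)).toNat with hx3def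
    have hq0 : (q : ℤ) ≠ 0 := by exact_mod_cast hq.ne_zero
    have hx3 : ((x3 : ℕ) : ℤ) = b % (q : ℤ) := Int.toNat_of_nonneg (Int.emod_nonneg b hq0)
    have hbq : (((x3 : ℕ) : ℤ) : ZMod q) = ((b : ℤ) : ZMod q) := by
      rw [hx3]
      exact ZMod.intCast_mod b q
    have hfx3q : (((f.eval ((x3 : ℕ) : ℤ) : ℤ) : ZMod q)) = 0 := by
      rw [key]
      have : ((f.eval b : ℤ) : ZMod q) = (f.map (Int.castRingHom (ZMod q))).eval ((b : ZMod q)) :=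
        key q b
      rw [show (((x3 : ℕ) : ℤ) : ZMod q) = ((b : ℤ) : ZMod q) from hbq]
      rw [← this, hf]
      simp [ZMod.natCast_eq_zero_iff, hqN]
    rcases H x3 with h0 | h1
    · -- then p divides f(x3), contradicting step2
      have := congrArg (ZMod.castHom hpN (ZMod p)) h0
      rw [map_pow, map_zero] at this
      have hcast : (ZMod.castHom hpN (ZMod p)) (((f.eval ((x3 : ℕ) : ℤ) : ℤ) : ZMod N))
          = (((f.eval ((x3 : ℕ) : ℤ) : ℤ) : ZMod p)) := map_intCast _ _
      rw [hcast] at this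
      exact step2 x3 (pow_eq_zero_iff hNsub |>.mp this)
    · -- then 1 = 0 mod q
      have := congrArg (ZMod.castHom hqN (ZMod q)) h1
      rw [map_pow, map_one] at this
      have hcast : (ZMod.castHom hqN (ZMod q)) (((f.eval ((x3 : ℕ) : ℤ) : ℤ) : ZMod N))
          = (((f.eval ((x3 : ℕ) : ℤ) : ℤ) : ZMod q)) := map_intCast _ _
      rw [hcast, hfx3q, zero_pow hNsub] at this
      exact zero_ne_one this
end

section
/- Let N > 1 be an odd natural number which is either prime or has at least two distinct prime factors. Let b ∈ ℤ and let f ∈ ℤ[X] be a digit polynomial of N to base b (i.e. f(b) = N) such that gcd(lc f, N) = 1 and d := deg f is smaller than q := max{q' prime : q' ∣ N}, the largest prime factor of N. Then N is prime if and only if for every x ∈ Z_N, f(x)^{(N−1)/2} mod N ∈ {0, 1, N−1} (i.e. f(x)^{(N−1)/2} ≡ −1, 0 or 1 mod N). -/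
/-!
If `N` is prime, `f(x)^((N-1)/2) ≡ 0, ±1 (mod N)` by Euler's criterion. Otherwise `N` has a prime
factor other than `q`, so `N = q^k m` with `q ∤ m` and `m > 1`. As `deg f < q` and `q ∤ lc f`, the
reduction of `f` mod `q` has a non-root `z`, and by the Chinese remainder theorem some `x ∈ Z_N` has
`x ≡ z (mod q)` and `x ≡ b (mod m)`. Then `q ∤ f(x)` while `m ∣ f(x)` because `m ∣ f(b) = N`, so
`f(x)^((N-1)/2)` is divisible by `m` but not by `q`, which rules out `0` and `±1` mod `N`.
-/

open Polynomial

theorem ZMod.pow_sub_one_div_two_eq_zero_or_one_or_neg_one {p : ℕ} [Fact p.Prime] (a : ZMod p) :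
    a ^ ((p - 1) / 2) = 0 ∨ a ^ ((p - 1) / 2) = 1 ∨ a ^ ((p - 1) / 2) = -1 := by
  rcases (Fact.out : p.Prime).eq_two_or_odd' with rfl | hodd
  · simp
  by_cases ha : a = 0
  · left
    rw [ha, zero_pow]
    have := (Fact.out : p.Prime).two_le
    obtain ⟨k, rfl⟩ := hodd
    omega
  · right
    rw [show (p - 1) / 2 = p / 2 by obtain ⟨k, rfl⟩ := hodd; omega]
    exact ZMod.pow_div_two_eq_neg_one_or_one p ha

theorem Int.pow_sub_one_div_two_emod_prime {p : ℕ} (hp : p.Prime) (a : ℤ) :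
    a ^ ((p - 1) / 2) % p = 0 ∨ a ^ ((p - 1) / 2) % p = 1 ∨
      a ^ ((p - 1) / 2) % p = p - 1 := by
  have := Fact.mk hp
  obtain ⟨n, rfl⟩ : ∃ n, p = n + 1 := ⟨p - 1, by have := hp.pos; omega⟩
  rw [← ZMod.val_intCast, Int.cast_pow]
  rcases ZMod.pow_sub_one_div_two_eq_zero_or_one_or_neg_one (a : ZMod (n + 1)) with h | h | h <;>
    rw [h]
  · simp
  · simp [ZMod.val_one]
  · simp [ZMod.val_neg_one]

theorem dvd_or_dvd_sub_one_or_dvd_add_one_of_emod {x N : ℤ}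
    (h : x % N = 0 ∨ x % N = 1 ∨ x % N = N - 1) : N ∣ x ∨ N ∣ x - 1 ∨ N ∣ x + 1 := by
  rcases h with h | h | h
  · exact .inl (Int.dvd_of_emod_eq_zero h)
  · exact .inr (.inl (Int.dvd_self_sub_of_emod_eq h))
  · refine .inr (.inr ?_)
    have := dvd_add (Int.dvd_self_sub_of_emod_eq h) (dvd_refl N)
    rwa [sub_sub_eq_add_sub, sub_add_cancel] at this

theorem not_dvd_pow_or_pow_sub_one_or_pow_add_one {R : Type*} [CommRing R] {N q m a : R}
    (hq : Prime q) (hqN : q ∣ N) (hmN : m ∣ N) (hm : ¬IsUnit m) (hqa : ¬q ∣ a) (hma : m ∣ a)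
    {e : ℕ} (he : e ≠ 0) : ¬(N ∣ a ^ e ∨ N ∣ a ^ e - 1 ∨ N ∣ a ^ e + 1) := by
  have hmae : m ∣ a ^ e := dvd_pow hma he
  rintro (h | h | h)
  · exact hqa (hq.dvd_of_dvd_pow (hqN.trans h))
  · exact hm (isUnit_of_dvd_one (by simpa using dvd_sub hmae (hmN.trans h)))
  · exact hm (isUnit_of_dvd_one (by simpa using dvd_sub (hmN.trans h) hmae))

theorem Polynomial.exists_eval_map_ne_zero {R K : Type*} [Semiring R] [CommRing K] [IsDomain K]
    [Fintype K] (φ : R →+* K) {f : R[X]} (hlc : φ f.leadingCoeff ≠ 0)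
    (hdeg : f.natDegree < Fintype.card K) : ∃ z, (f.map φ).eval z ≠ 0 := by
  refine (f.map φ).exists_eval_ne_zero_of_natDegree_lt_card (fun h => hlc ?_) ?_
  · simpa [h] using (f.coeff_map φ f.natDegree).symm
  · rw [Cardinal.mk_fintype]
    exact_mod_cast natDegree_map_le.trans_lt hdeg

theorem ZMod.exists_lt_natCast_eq_and_natCast_eq {N q m : ℕ} (hN : N ≠ 0) (hqm : q.Coprime m)
    (hqN : q ∣ N) (hmN : m ∣ N) (z : ZMod q) (w : ZMod m) :
    ∃ x < N, (x : ZMod q) = z ∧ (x : ZMod m) = w := by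
  obtain ⟨c, hcq, hcm⟩ := Nat.chineseRemainder hqm z.val w.val
  have cast_mod {n : ℕ} (hn : n ∣ N) (r : ZMod n) (hc : c ≡ r.val [MOD n]) :
      ((c % N : ℕ) : ZMod n) = r := by
    have := NeZero.mk (ne_zero_of_dvd_ne_zero hN hn)
    rw [← ZMod.natCast_zmod_val r, ZMod.natCast_eq_natCast_iff]
    exact ((Nat.mod_modEq c N).of_dvd hn).trans hc
  exact ⟨c % N, Nat.mod_lt c (Nat.pos_of_ne_zero hN), cast_mod hqN z hcq, cast_mod hmN w hcm⟩

theorem exists_lt_not_dvd_eval_and_dvd_eval {N q m : ℕ} [Fact q.Prime] (hN : N ≠ 0)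
    (hqm : q.Coprime m) (hqN : q ∣ N) (hmN : m ∣ N) {f : ℤ[X]}
    (hlc : ¬(q : ℤ) ∣ f.leadingCoeff) (hdeg : f.natDegree < q) {b : ℤ}
    (hb : (m : ℤ) ∣ f.eval b) :
    ∃ x < N, ¬(q : ℤ) ∣ f.eval (x : ℤ) ∧ (m : ℤ) ∣ f.eval (x : ℤ) := by
  have eval_cast (n x : ℕ) :
      ((f.eval (x : ℤ) : ℤ) : ZMod n) = (f.map (Int.castRingHom (ZMod n))).eval (x : ZMod n) := by
    rw [eval_natCast_map, eq_intCast]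
  obtain ⟨z, hz⟩ := exists_eval_map_ne_zero (Int.castRingHom (ZMod q)) (f := f)
    (by simpa [ZMod.intCast_zmod_eq_zero_iff_dvd] using hlc) (by rwa [ZMod.card])
  obtain ⟨x, hxN, hxq, hxm⟩ := ZMod.exists_lt_natCast_eq_and_natCast_eq hN hqm hqN hmN z b
  refine ⟨x, hxN, ?_, ?_⟩
  · rwa [← ZMod.intCast_zmod_eq_zero_iff_dvd, eval_cast, hxq]
  · rwa [← ZMod.intCast_zmod_eq_zero_iff_dvd, eval_cast, hxm, eval_intCast_map,
      eq_intCast, ZMod.intCast_zmod_eq_zero_iff_dvd]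

theorem Nat.ordCompl_ne_one_of_prime_dvd {n p q : ℕ} (hp : p.Prime) (hq : q.Prime) (hpn : p ∣ n)
    (hpq : p ≠ q) : ordCompl[q] n ≠ 1 := by
  have hqp : ¬q ∣ p := fun h => hpq ((Nat.prime_dvd_prime_iff_eq hq hp).mp h).symm
  intro h
  have := h ▸ Nat.dvd_ordCompl_of_dvd_not_dvd hpn hqp
  exact hp.ne_one (Nat.dvd_one.mp this)

theorem primality_characterization_euler_general (N : ℕ)
    (hcases : N.Prime ∨ 2 ≤ N.primeFactors.card)
    (b : ℤ) (f : Polynomial ℤ) (hf : f.eval b = (N : ℤ))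
    (hlc : Int.gcd f.leadingCoeff (N : ℤ) = 1)
    (q : ℕ) (hq : q.Prime) (hqN : q ∣ N)
    (hdeg : f.natDegree < q) :
    N.Prime ↔ ∀ x ∈ Finset.range N,
      (f.eval ((x : ℕ) : ℤ)) ^ ((N - 1) / 2) % (N : ℤ) = 0 ∨
      (f.eval ((x : ℕ) : ℤ)) ^ ((N - 1) / 2) % (N : ℤ) = 1 ∨
      (f.eval ((x : ℕ) : ℤ)) ^ ((N - 1) / 2) % (N : ℤ) = (N : ℤ) - 1 := by
  refine ⟨fun hN _ _ => Int.pow_sub_one_div_two_emod_prime hN _, fun hcond => ?_⟩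
  by_contra hN
  obtain ⟨p, hpN, hpq⟩ := Finset.exists_mem_ne (hcases.resolve_left hN) q
  obtain ⟨hp, hpN, hN0⟩ := Nat.mem_primeFactors.mp hpN
  have he : (N - 1) / 2 ≠ 0 := by
    have := Nat.le_of_dvd (Nat.pos_of_ne_zero hN0) hpN
    have := Nat.le_of_dvd (Nat.pos_of_ne_zero hN0) hqN
    have := hp.two_le
    have := hq.two_le
    omega
  have := Fact.mk hq
  have hqZ : Prime (q : ℤ) := Nat.prime_iff_prime_int.mp hq
  have hqlc : ¬(q : ℤ) ∣ f.leadingCoeff := fun h => hqZ.not_isUnit <|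
    (Int.isCoprime_iff_gcd_eq_one.mpr hlc).isUnit_of_dvd' h (Int.natCast_dvd_natCast.mpr hqN)
  set m := ordCompl[q] N
  have hmN : m ∣ N := Nat.ordCompl_dvd N q
  obtain ⟨x, hxN, hqx, hmx⟩ := exists_lt_not_dvd_eval_and_dvd_eval hN0
    (Nat.coprime_ordCompl hq hN0) hqN hmN hqlc hdeg (b := b) (by rw [hf]; exact_mod_cast hmN)
  refine not_dvd_pow_or_pow_sub_one_or_pow_add_one hqZ (Int.natCast_dvd_natCast.mpr hqN)
    (Int.natCast_dvd_natCast.mpr hmN) ?_ hqx hmx he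
    (dvd_or_dvd_sub_one_or_dvd_add_one_of_emod (hcond x (Finset.mem_range.mpr hxN)))
  rw [Int.ofNat_isUnit, Nat.isUnit_iff]
  exact Nat.ordCompl_ne_one_of_prime_dvd hp hq hpN hpq

/-- Euler-type primality characterization via digit polynomials: let `N > 1` be odd
and either prime or with at least two distinct prime factors. Let `f ∈ ℤ[X]` with
`f(b) = N`, `gcd(lc f, N) = 1`, and `deg f` smaller than the largest prime factor
`q` of `N`. Then `N` is prime iff `f(x)^{(N−1)/2} mod N ∈ {0, 1, N−1}` (i.e.
`f(x)^{(N−1)/2} ≡ −1, 0, 1 (mod N)`) for all `x ∈ Z_N`. -/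
theorem primality_characterization_euler (N : ℕ) (hN1 : 1 < N) (hodd : Odd N)
    (hcases : N.Prime ∨ 2 ≤ N.primeFactors.card)
    (b : ℤ) (f : Polynomial ℤ) (hf : f.eval b = (N : ℤ))
    (hlc : Int.gcd f.leadingCoeff (N : ℤ) = 1)
    (q : ℕ) (hq : q.Prime) (hqN : q ∣ N)
    (hqmax : ∀ q' : ℕ, q'.Prime → q' ∣ N → q' ≤ q)
    (hdeg : f.natDegree < q) :
    N.Prime ↔ ∀ x ∈ Finset.range N,
      (f.eval ((x : ℕ) : ℤ)) ^ ((N - 1) / 2) % (N : ℤ) = 0 ∨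
      (f.eval ((x : ℕ) : ℤ)) ^ ((N - 1) / 2) % (N : ℤ) = 1 ∨
      (f.eval ((x : ℕ) : ℤ)) ^ ((N - 1) / 2) % (N : ℤ) = (N : ℤ) - 1 :=
  primality_characterization_euler_general N hcases b f hf hlc q hq hqN hdeg
end
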